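/- arXiv:1303.4664 — 7 statements merged into one kernel-verified Lean document; each statement's English description precedes it below -/
import Mathlib

section
/- Consider one-dimensional online gradient descent with randomized rounding on the feasible set [−R, R] (R > 0): β̂_1 = 0; on each round t = 1, …, T the adversary, seeing the entire history β̂_1, …, β̂_t, chooses a gradient g_t with |g_t| ≤ G; the algorithm sets β_{t+1} = max(−R, min(R, β̂_t − η_t g_t)) and then β̂_{t+1} = RandomRound(β_{t+1}, ε_t), where the rounding randomness on each round is independent of everything else. Assume the learning-rate schedule η_t > 0 is non-increasing, the resolution schedule satisfies ε_t ≤ γ·η_t for a constant γ > 0, and each ε_t is chosen so that −R and R lie on the grid ε_t·ℤ. Then for any comparator point β* ∈ [−R, R], the expected regret satisfies E[Σ_{t=1}^T g_t·(β̂_t − β*)] ≤ (2R)²/(2η_T) + (1/2)·(G² + γ²)·Σ_{t=1}^T η_t + γ·R·√T, where the expectation is over the rounding randomness. -/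
open MeasureTheory ProbabilityTheory

/-- Randomized rounding of `β` to the grid `ε·ℤ`, driven by a uniform sample `u ∈ [0,1]`:
with `a = ε⌊β/ε⌋` and `b = ε⌈β/ε⌉`, return `b` with probability `(β - a)/ε` and `a`
otherwise. -/
noncomputable def randomRound (ε β u : ℝ) : ℝ :=
  if u < (β - ε * ⌊β / ε⌋) / ε then ε * ⌈β / ε⌉ else ε * ⌊β / ε⌋

/-!
The rounding is unbiased with conditional variance at most `ε²`, and the fresh uniform sample
of round `t` is independent of everything the algorithm and the adversary have seen so far.
So, writing `D_t = E[(β̂_t - β*)²]`, nonexpansiveness of the projection onto `[-R, R]` gives the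
usual descent inequality in expectation,
`2 η_t E[g_t (β̂_t - β*)] ≤ D_t - D_{t+1} + η_t² G² + ε_t²`,
with the extra `ε_t² ≤ γ² η_t²` coming from rounding. Dividing by `2 η_t` and summing by parts
with `0 ≤ D_t ≤ (2R)²` and `1/η_t` non-decreasing yields the bound.
-/

section RandomRound

variable {ε : ℝ}

lemma mul_floor_div_le (hε : 0 < ε) (x : ℝ) : ε * ⌊x / ε⌋ ≤ x := by
  have := Int.floor_le (x / ε)
  calc ε * ⌊x / ε⌋ ≤ ε * (x / ε) := by gcongr
    _ = x := mul_div_cancel₀ x hε.ne'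

lemma le_mul_ceil_div (hε : 0 < ε) (x : ℝ) : x ≤ ε * ⌈x / ε⌉ := by
  have := Int.le_ceil (x / ε)
  calc x = ε * (x / ε) := (mul_div_cancel₀ x hε.ne').symm
    _ ≤ ε * ⌈x / ε⌉ := by gcongr

lemma randomRound_eq_or (ε x u : ℝ) :
    randomRound ε x u = ε * ⌈x / ε⌉ ∨ randomRound ε x u = ε * ⌊x / ε⌋ := by
  unfold randomRound; split_ifs <;> simp

lemma randomRound_mem_Icc (hε : 0 < ε) {m n : ℤ} {x : ℝ} (hx : x ∈ Set.Icc (m * ε) (n * ε))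
    (u : ℝ) : randomRound ε x u ∈ Set.Icc (m * ε) (n * ε) := by
  have hm : m ≤ ⌊x / ε⌋ := Int.le_floor.2 ((le_div_iff₀ hε).2 hx.1)
  have hn : ⌈x / ε⌉ ≤ n := Int.ceil_le.2 ((div_le_iff₀ hε).2 hx.2)
  rcases randomRound_eq_or ε x u with h | h <;> rw [h] <;> constructor
  · exact hx.1.trans (le_mul_ceil_div hε x)
  · rw [mul_comm]; gcongr
  · rw [mul_comm]; gcongr
  · exact (mul_floor_div_le hε x).trans hx.2

lemma abs_randomRound_sub_le (hε : 0 < ε) (x u : ℝ) : |randomRound ε x u - x| ≤ ε := by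
  have hfloor : x - ε < ε * ⌊x / ε⌋ := by
    have := Int.lt_floor_add_one (x / ε)
    have : x < ε * (⌊x / ε⌋ + 1) := by
      calc x = ε * (x / ε) := (mul_div_cancel₀ x hε.ne').symm
        _ < ε * (⌊x / ε⌋ + 1) := by gcongr
    linarith
  have hceil : ε * ⌈x / ε⌉ < x + ε := by
    have := Int.ceil_lt_add_one (x / ε)
    have : ε * ⌈x / ε⌉ < ε * (x / ε + 1) := by gcongr
    rw [mul_add, mul_div_cancel₀ x hε.ne'] at this
    linarith
  rw [abs_le]
  rcases randomRound_eq_or ε x u with h | h <;> rw [h] <;> constructor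
  all_goals linarith [mul_floor_div_le hε x, le_mul_ceil_div hε x]

lemma measurable_randomRound (ε : ℝ) :
    Measurable fun p : ℝ × ℝ => randomRound ε p.1 p.2 := by
  unfold randomRound
  refine Measurable.ite (measurableSet_lt measurable_snd ?_) ?_ ?_ <;> fun_prop

lemma sub_mul_floor_div_div_eq_fract (hε : 0 < ε) (x : ℝ) :
    (x - ε * ⌊x / ε⌋) / ε = Int.fract (x / ε) := by
  rw [Int.fract, sub_div, mul_div_cancel_left₀ _ hε.ne']

lemma integral_comp_randomRound (hε : 0 < ε) (f : ℝ → ℝ) (x : ℝ) :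
    ∫ u in Set.Icc 0 1, f (randomRound ε x u) = f (ε * ⌊x / ε⌋)
      + Int.fract (x / ε) * (f (ε * ⌈x / ε⌉) - f (ε * ⌊x / ε⌋)) := by
  set p := Int.fract (x / ε)
  have hp : (x - ε * ⌊x / ε⌋) / ε = p := sub_mul_floor_div_div_eq_fract hε x
  have hf : ∀ u, f (randomRound ε x u) = f (ε * ⌊x / ε⌋)
      + (Set.Iio p).indicator (fun _ => f (ε * ⌈x / ε⌉) - f (ε * ⌊x / ε⌋)) u := by
    intro u
    by_cases hu : u < p <;> simp [randomRound, hp, hu]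
  have hvol : volume.real (Set.Iio p ∩ Set.Icc 0 1) = p := by
    have : Set.Iio p ∩ Set.Icc 0 1 = Set.Ico 0 p := by
      ext u
      simp only [Set.mem_inter_iff, Set.mem_Iio, Set.mem_Icc, Set.mem_Ico]
      constructor
      · rintro ⟨hup, hu₀, -⟩; exact ⟨hu₀, hup⟩
      · rintro ⟨hu₀, hup⟩; exact ⟨hup, hu₀, by linarith [Int.fract_lt_one (x / ε)]⟩
    rw [this, Real.volume_real_Ico_of_le (Int.fract_nonneg _), sub_zero]
  simp_rw [hf]
  rw [integral_add (integrable_const _) ((integrable_const _).indicator measurableSet_Iio),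
    integral_indicator_const _ measurableSet_Iio]
  simp [measureReal_restrict_apply measurableSet_Iio, hvol]

lemma integral_randomRound_sub_sq_le (hε : 0 < ε) (x c : ℝ) :
    ∫ u in Set.Icc 0 1, (randomRound ε x u - c) ^ 2 ≤ (x - c) ^ 2 + ε ^ 2 := by
  rw [integral_comp_randomRound hε (fun y => (y - c) ^ 2)]
  have hcases := Int.fract_eq_zero_or_add_one_sub_ceil (x / ε)
  have hfloor : ε * ⌊x / ε⌋ = x - ε * Int.fract (x / ε) := by
    rw [← sub_mul_floor_div_div_eq_fract hε, mul_div_cancel₀ _ hε.ne']; ring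
  set p := Int.fract (x / ε)
  rcases hcases with h | h
  · simp only [hfloor, h]
    nlinarith
  · have hceil : ε * ⌈x / ε⌉ = x + ε * (1 - p) := by
      rw [h]; field_simp; ring
    have hp₀ : 0 ≤ p := Int.fract_nonneg _
    have hp₁ : p ≤ 1 := (Int.fract_lt_one _).le
    have hvar : p * (1 - p) ≤ 1 := by nlinarith
    simp only [hfloor, hceil]
    calc _ = (x - c) ^ 2 + ε ^ 2 * (p * (1 - p)) := by ring
      _ ≤ (x - c) ^ 2 + ε ^ 2 * 1 := by gcongr
      _ = (x - c) ^ 2 + ε ^ 2 := by ring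

end RandomRound

lemma ProbabilityTheory.IndepFun.integral_comp_eq_integral_integral {Ω α β : Type*}
    [MeasurableSpace Ω] [MeasurableSpace α] [MeasurableSpace β] {P : Measure Ω}
    [IsFiniteMeasure P] {X : Ω → α} {Y : Ω → β} (hXY : IndepFun X Y P) (hX : Measurable X)
    (hY : Measurable Y) {F : α × β → ℝ} (hF : Measurable F)
    (hFXY : Integrable (fun ω => F (X ω, Y ω)) P) :
    ∫ ω, F (X ω, Y ω) ∂P = ∫ x, ∫ y, F (x, y) ∂(P.map Y) ∂(P.map X) := by
  have hXY' : Measurable fun ω => (X ω, Y ω) := hX.prodMk hY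
  have hmap := hXY.map_prod_eq_prod_map_map hX.aemeasurable hY.aemeasurable
  have hF' : Integrable F ((P.map X).prod (P.map Y)) := by
    rw [← hmap]; exact (integrable_map_measure hF.aestronglyMeasurable hXY'.aemeasurable).2 hFXY
  rw [← integral_map hXY'.aemeasurable hF.aestronglyMeasurable, hmap, integral_prod F hF']

lemma integral_randomRound_comp_sub_sq_le {Ω : Type*} [MeasurableSpace Ω] {P : Measure Ω}
    [IsProbabilityMeasure P] {X V : Ω → ℝ} (hX : Measurable X) (hV : Measurable V)
    (hXV : IndepFun X V P) (hV_law : P.map V = volume.restrict (Set.Icc 0 1))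
    {ε : ℝ} (hε : 0 < ε) (c : ℝ) (hXc : Integrable (fun ω => (X ω - c) ^ 2) P) :
    ∫ ω, (randomRound ε (X ω) (V ω) - c) ^ 2 ∂P ≤ ∫ ω, (X ω - c) ^ 2 ∂P + ε ^ 2 := by
  have hF : Measurable fun p : ℝ × ℝ => (randomRound ε p.1 p.2 - c) ^ 2 := by
    have := measurable_randomRound ε; fun_prop
  have hFXV : Integrable (fun ω => (randomRound ε (X ω) (V ω) - c) ^ 2) P := by
    refine (hXc.const_mul 2 |>.add (integrable_const (2 * ε ^ 2))).mono'
      (hF.comp (hX.prodMk hV)).aestronglyMeasurable (ae_of_all _ fun ω => ?_)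
    obtain ⟨hlo, hhi⟩ := abs_le.1 (abs_randomRound_sub_le hε (X ω) (V ω))
    have hround : (randomRound ε (X ω) (V ω) - X ω) ^ 2 ≤ ε ^ 2 := sq_le_sq' hlo hhi
    rw [Real.norm_of_nonneg (sq_nonneg _), Pi.add_apply]
    nlinarith [sq_nonneg (randomRound ε (X ω) (V ω) - X ω - (X ω - c))]
  have hXc' : Integrable (fun x => (x - c) ^ 2 + ε ^ 2) (P.map X) := by
    rw [integrable_map_measure (by fun_prop) hX.aemeasurable]
    exact hXc.add (integrable_const _)
  calc ∫ ω, (randomRound ε (X ω) (V ω) - c) ^ 2 ∂P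
      = ∫ x, ∫ u, (randomRound ε x u - c) ^ 2 ∂(P.map V) ∂(P.map X) :=
        hXV.integral_comp_eq_integral_integral hX hV hF hFXV
    _ ≤ ∫ x, ((x - c) ^ 2 + ε ^ 2) ∂(P.map X) := by
        refine integral_mono_of_nonneg (ae_of_all _ fun x => integral_nonneg fun u => sq_nonneg _)
          hXc' (ae_of_all _ fun x => ?_)
        rw [hV_law]
        exact integral_randomRound_sub_sq_le hε x c
    _ = ∫ ω, (X ω - c) ^ 2 ∂P + ε ^ 2 := by
        rw [integral_map hX.aemeasurable (by fun_prop), integral_add hXc (integrable_const _)]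
        simp

section Interval

variable {α : Type*} [Ring α] [LinearOrder α] [IsStrictOrderedRing α] {a b c : α}

lemma abs_sub_le_of_mem_Icc {x : α} (hx : x ∈ Set.Icc a b) (hc : c ∈ Set.Icc a b) :
    |x - c| ≤ b - a :=
  abs_sub_le_iff.2 ⟨sub_le_sub hx.2 hc.1, sub_le_sub hc.2 hx.1⟩

lemma sq_sub_le_of_mem_Icc {x : α} (hx : x ∈ Set.Icc a b) (hc : c ∈ Set.Icc a b) :
    (x - c) ^ 2 ≤ (b - a) ^ 2 :=
  sq_le_sq' (abs_le.1 (abs_sub_le_of_mem_Icc hx hc)).1 (abs_le.1 (abs_sub_le_of_mem_Icc hx hc)).2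

lemma sq_max_min_sub_le (hc : c ∈ Set.Icc a b) (y : α) :
    (max a (min b y) - c) ^ 2 ≤ (y - c) ^ 2 := by
  have hab : a ≤ b := hc.1.trans hc.2
  have h := Set.abs_projIcc_sub_projIcc hab (c := y) (d := c)
  rw [Set.coe_projIcc, Set.projIcc_of_mem hab hc] at h
  exact sq_le_sq.2 h

end Interval

section Integrability

variable {Ω : Type*} [MeasurableSpace Ω] {P : Measure Ω} [IsFiniteMeasure P] {X Y : Ω → ℝ}
  {a b c G : ℝ}

lemma integrable_sq_sub_of_mem_Icc (hX : Measurable X) (hXab : ∀ ω, X ω ∈ Set.Icc a b)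
    (hc : c ∈ Set.Icc a b) : Integrable (fun ω => (X ω - c) ^ 2) P :=
  .of_bound ((hX.sub_const c).pow_const 2).aestronglyMeasurable ((b - a) ^ 2) <| ae_of_all _
    fun ω => (Real.norm_of_nonneg (sq_nonneg _)).trans_le (sq_sub_le_of_mem_Icc (hXab ω) hc)

lemma integrable_mul_sub_of_mem_Icc (hX : Measurable X) (hY : Measurable Y)
    (hXab : ∀ ω, X ω ∈ Set.Icc a b) (hc : c ∈ Set.Icc a b) (hYG : ∀ ω, |Y ω| ≤ G) :
    Integrable (fun ω => Y ω * (X ω - c)) P :=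
  .of_bound (hY.mul (hX.sub_const c)).aestronglyMeasurable (G * (b - a)) <| ae_of_all _
    fun ω => (abs_mul _ _).trans_le <| mul_le_mul (hYG ω) (abs_sub_le_of_mem_Icc (hXab ω) hc)
      (abs_nonneg _) ((abs_nonneg _).trans (hYG ω))

end Integrability

lemma two_mul_integral_mul_sub_le {Ω : Type*} {m : MeasurableSpace Ω} [mΩ : MeasurableSpace Ω]
    {P : Measure Ω} [IsProbabilityMeasure P] (hm : m ≤ mΩ) {X Y V : Ω → ℝ}
    (hX : Measurable[m] X) (hY : Measurable[m] Y) (hV : Measurable V)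
    (hmV : Indep m (MeasurableSpace.comap V inferInstance) P)
    (hV_law : P.map V = volume.restrict (Set.Icc 0 1)) {a b c G η ε : ℝ}
    (hc : c ∈ Set.Icc a b) (hXab : ∀ ω, X ω ∈ Set.Icc a b) (hYG : ∀ ω, |Y ω| ≤ G) (hε : 0 < ε) :
    2 * η * ∫ ω, Y ω * (X ω - c) ∂P
      ≤ ∫ ω, (X ω - c) ^ 2 ∂P
        - ∫ ω, (randomRound ε (max a (min b (X ω - η * Y ω))) (V ω) - c) ^ 2 ∂P
        + η ^ 2 * G ^ 2 + ε ^ 2 := by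
  set Z := fun ω => max a (min b (X ω - η * Y ω))
  have hZ : Measurable[m] Z := by fun_prop
  have hZab : ∀ ω, Z ω ∈ Set.Icc a b := fun ω => (Set.projIcc a b (hc.1.trans hc.2) _).2
  have hZV : IndepFun Z V P :=
    (IndepFun_iff_Indep _ _ _).2 (indep_of_indep_of_le_left hmV hZ.comap_le)
  have hXm := hX.mono hm le_rfl
  have hYm := hY.mono hm le_rfl
  have hXc : Integrable (fun ω => (X ω - c) ^ 2) P := integrable_sq_sub_of_mem_Icc hXm hXab hc
  have hXYc : Integrable (fun ω => (X ω - c) ^ 2 - 2 * η * (Y ω * (X ω - c))) P :=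
    hXc.sub ((integrable_mul_sub_of_mem_Icc hXm hYm hXab hc hYG).const_mul _)
  have hY2 (ω : Ω) : η ^ 2 * Y ω ^ 2 ≤ η ^ 2 * G ^ 2 :=
    mul_le_mul_of_nonneg_left (sq_le_sq' (abs_le.1 (hYG ω)).1 (abs_le.1 (hYG ω)).2) (sq_nonneg η)
  have hround := integral_randomRound_comp_sub_sq_le (hZ.mono hm le_rfl) hV hZV hV_law hε c
    (integrable_sq_sub_of_mem_Icc (hZ.mono hm le_rfl) hZab hc)
  have hproj : ∫ ω, (Z ω - c) ^ 2 ∂P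
      ≤ ∫ ω, (X ω - c) ^ 2 ∂P - 2 * η * ∫ ω, Y ω * (X ω - c) ∂P + η ^ 2 * G ^ 2 :=
    calc ∫ ω, (Z ω - c) ^ 2 ∂P
        ≤ ∫ ω, ((X ω - c) ^ 2 - 2 * η * (Y ω * (X ω - c)) + η ^ 2 * G ^ 2) ∂P :=
          integral_mono (integrable_sq_sub_of_mem_Icc (hZ.mono hm le_rfl) hZab hc)
            (hXYc.add (integrable_const _)) fun ω =>
              (sq_max_min_sub_le hc _).trans (by nlinarith [hY2 ω])
      _ = _ := by
          rw [integral_add hXYc (integrable_const _), integral_sub hXc, integral_const_mul]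
          · simp
          · exact (integrable_mul_sub_of_mem_Icc hXm hYm hXab hc hYG).const_mul _
  linarith

lemma Finset.sum_range_mul_sub_succ_le {w D : ℕ → ℝ} {M : ℝ} (hw : Monotone w) (hw₀ : 0 ≤ w 0)
    (hD₀ : ∀ t, 0 ≤ D t) (hDM : ∀ t, D t ≤ M) (n : ℕ) :
    ∑ t ∈ Finset.range n, w (t + 1) * (D t - D (t + 1)) ≤ M * w n := by
  suffices h : ∑ t ∈ Finset.range n, w (t + 1) * (D t - D (t + 1)) + w n * D n ≤ M * w n from
    by nlinarith [hD₀ n, hw₀.trans (hw n.zero_le)]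
  induction n with
  | zero => simpa [mul_comm] using mul_le_mul_of_nonneg_left (hDM 0) hw₀
  | succ n ih =>
    have hgap : (w (n + 1) - w n) * D n ≤ (w (n + 1) - w n) * M :=
      mul_le_mul_of_nonneg_left (hDM n) (sub_nonneg.2 (hw n.le_succ))
    rw [Finset.sum_range_succ]
    linarith

section Past

variable {Ω β : Type*} [mβ : MeasurableSpace β]

abbrev sigmaBefore (U : ℕ → Ω → β) (t : ℕ) : MeasurableSpace Ω :=
  ⨆ j ∈ Set.Iio t, mβ.comap (U j)

lemma sigmaBefore_mono (U : ℕ → Ω → β) : Monotone (sigmaBefore U) :=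
  fun _ _ hst => biSup_mono fun _ hj => lt_of_lt_of_le hj hst

lemma sigmaBefore_le {mΩ : MeasurableSpace Ω} {U : ℕ → Ω → β} (hU : ∀ t, Measurable (U t))
    (t : ℕ) : sigmaBefore U t ≤ mΩ :=
  iSup₂_le fun j _ => (hU j).comap_le

lemma measurable_sigmaBefore_succ (U : ℕ → Ω → β) (t : ℕ) :
    Measurable[sigmaBefore U (t + 1)] (U t) :=
  Measurable.of_comap_le (le_iSup₂_of_le t (Nat.lt_succ_self t) le_rfl)

lemma ProbabilityTheory.iIndepFun.indep_sigmaBefore {mΩ : MeasurableSpace Ω} {P : Measure Ω}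
    {U : ℕ → Ω → β} (hU : ∀ t, Measurable (U t)) (hind : iIndepFun U P) (t : ℕ) :
    Indep (sigmaBefore U t) (mβ.comap (U t)) P := by
  have h := indep_iSup_of_disjoint (fun j => (hU j).comap_le) hind.iIndep
    (S := Set.Iio t) (T := {t}) (Set.disjoint_singleton_right.2 (lt_irrefl t))
  rwa [iSup_singleton] at h

end Past

structure IsRoundedOGD {Ω : Type*} (R : ℝ) (η ε : ℕ → ℝ) (U : ℕ → Ω → ℝ)
    (A : (t : ℕ) → (Fin t → ℝ) → ℝ) (βhat β g : ℕ → Ω → ℝ) : Prop where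
  init : ∀ ω, βhat 1 ω = 0
  adversary : ∀ t, 1 ≤ t → ∀ ω, g t ω = A t (fun s : Fin t => βhat (s.val + 1) ω)
  step : ∀ t, 1 ≤ t → ∀ ω, β (t + 1) ω = max (-R) (min R (βhat t ω - η t * g t ω))
  round : ∀ t, 1 ≤ t → ∀ ω, βhat (t + 1) ω = randomRound (ε t) (β (t + 1) ω) (U t ω)

namespace IsRoundedOGD

variable {Ω : Type*} {R : ℝ} {η ε : ℕ → ℝ} {U : ℕ → Ω → ℝ} {A : (t : ℕ) → (Fin t → ℝ) → ℝ}
  {βhat β g : ℕ → Ω → ℝ}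

lemma measurable_adversary (h : IsRoundedOGD R η ε U A βhat β g) (hA : ∀ t, Measurable (A t))
    {m : MeasurableSpace Ω} {t : ℕ} (ht : 1 ≤ t)
    (hpast : ∀ s, 1 ≤ s → s ≤ t → Measurable[m] (βhat s)) : Measurable[m] (g t) := by
  rw [funext (h.adversary t ht)]
  exact (hA t).comp (measurable_pi_lambda _ fun s => hpast _ (Nat.le_add_left 1 _) s.isLt)

lemma measurable_sigmaBefore (h : IsRoundedOGD R η ε U A βhat β g) (hA : ∀ t, Measurable (A t))
    (t : ℕ) : ∀ s, 1 ≤ s → s ≤ t → Measurable[sigmaBefore U t] (βhat s) := by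
  induction t with
  | zero => intro s hs hst; omega
  | succ t ih =>
    have hpast : ∀ s, 1 ≤ s → s ≤ t → Measurable[sigmaBefore U (t + 1)] (βhat s) :=
      fun s hs hst => (ih s hs hst).mono (sigmaBefore_mono U t.le_succ) le_rfl
    intro s hs hst
    rcases Nat.le_succ_iff.1 hst with hst | rfl
    · exact hpast s hs hst
    rcases Nat.eq_zero_or_pos t with rfl | ht
    · rw [funext h.init]; exact measurable_const
    have hgt := h.measurable_adversary hA ht hpast
    have hβt := hpast t ht le_rfl
    rw [funext (h.round t ht), funext (h.step t ht)]
    exact (measurable_randomRound (ε t)).comp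
      (Measurable.prodMk (by fun_prop) (measurable_sigmaBefore_succ U t))

lemma mem_Icc (h : IsRoundedOGD R η ε U A βhat β g) (hR : 0 ≤ R) (hε : ∀ t, 0 < ε t)
    (hgrid : ∀ t, ∃ k : ℤ, R = k * ε t) : ∀ t, 1 ≤ t → ∀ ω, βhat t ω ∈ Set.Icc (-R) R := by
  intro t ht
  induction t, ht using Nat.le_induction with
  | base => intro ω; rw [h.init]; exact ⟨neg_nonpos.2 hR, hR⟩
  | succ t ht _ =>
    intro ω
    obtain ⟨k, hk⟩ := hgrid t
    have hgrid' : Set.Icc (-R) R = Set.Icc (((-k : ℤ) : ℝ) * ε t) ((k : ℝ) * ε t) := by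
      rw [hk]; push_cast; ring_nf
    rw [h.round t ht, hgrid']
    refine randomRound_mem_Icc (hε t) ?_ _
    rw [← hgrid', h.step t ht]
    exact (Set.projIcc (-R) R (by linarith) _).2

section Probability

variable [MeasurableSpace Ω] {P : Measure Ω} [IsProbabilityMeasure P] {G c : ℝ} {t : ℕ}

lemma integral_sq_sub_le (h : IsRoundedOGD R η ε U A βhat β g) (hR : 0 ≤ R)
    (hε : ∀ t, 0 < ε t) (hgrid : ∀ t, ∃ k : ℤ, R = k * ε t) (hc : c ∈ Set.Icc (-R) R)
    (ht : 1 ≤ t) : ∫ ω, (βhat t ω - c) ^ 2 ∂P ≤ (2 * R) ^ 2 := by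
  have hbound (ω : Ω) : ‖(βhat t ω - c) ^ 2‖ ≤ (2 * R) ^ 2 :=
    (Real.norm_of_nonneg (sq_nonneg _)).trans_le <|
      (sq_sub_le_of_mem_Icc (h.mem_Icc hR hε hgrid t ht ω) hc).trans_eq (by ring)
  calc ∫ ω, (βhat t ω - c) ^ 2 ∂P ≤ ‖∫ ω, (βhat t ω - c) ^ 2 ∂P‖ := le_abs_self _
    _ ≤ (2 * R) ^ 2 * P.real Set.univ := norm_integral_le_of_norm_le_const (ae_of_all _ hbound)
    _ = (2 * R) ^ 2 := by simp

lemma integrable_mul_sub (h : IsRoundedOGD R η ε U A βhat β g) (hU : ∀ t, Measurable (U t))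
    (hA : ∀ t, Measurable (A t)) (hR : 0 ≤ R) (hε : ∀ t, 0 < ε t)
    (hgrid : ∀ t, ∃ k : ℤ, R = k * ε t) (hgG : ∀ t, 1 ≤ t → ∀ ω, |g t ω| ≤ G)
    (hc : c ∈ Set.Icc (-R) R) (ht : 1 ≤ t) : Integrable (fun ω => g t ω * (βhat t ω - c)) P := by
  have hpast s hs hst := (h.measurable_sigmaBefore hA t s hs hst).mono (sigmaBefore_le hU t) le_rfl
  exact integrable_mul_sub_of_mem_Icc (hpast t ht le_rfl) (h.measurable_adversary hA ht hpast)
    (h.mem_Icc hR hε hgrid t ht) hc (hgG t ht)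

lemma integral_regret_le (h : IsRoundedOGD R η ε U A βhat β g)
    (hU : ∀ t, Measurable (U t)) (hind : iIndepFun U P)
    (hunif : ∀ t, P.map (U t) = volume.restrict (Set.Icc 0 1)) (hA : ∀ t, Measurable (A t))
    (hR : 0 ≤ R) (hε : ∀ t, 0 < ε t) (hgrid : ∀ t, ∃ k : ℤ, R = k * ε t) {γ : ℝ}
    (hη : 0 < η t) (hεη : ε t ≤ γ * η t) (hgG : ∀ t, 1 ≤ t → ∀ ω, |g t ω| ≤ G)
    (hc : c ∈ Set.Icc (-R) R) (ht : 1 ≤ t) :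
    ∫ ω, g t ω * (βhat t ω - c) ∂P
      ≤ (2 * η t)⁻¹ * (∫ ω, (βhat t ω - c) ^ 2 ∂P - ∫ ω, (βhat (t + 1) ω - c) ^ 2 ∂P)
        + 1 / 2 * (G ^ 2 + γ ^ 2) * η t := by
  have hpast := h.measurable_sigmaBefore hA t
  have hdescent := two_mul_integral_mul_sub_le (sigmaBefore_le hU t) (hpast t ht le_rfl)
    (h.measurable_adversary hA ht hpast) (hU t) (hind.indep_sigmaBefore hU t) (hunif t) hc
    (h.mem_Icc hR hε hgrid t ht) (hgG t ht) (hε t) (P := P) (η := η t)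
  have hnext : (fun ω => (βhat (t + 1) ω - c) ^ 2) = fun ω =>
      (randomRound (ε t) (max (-R) (min R (βhat t ω - η t * g t ω))) (U t ω) - c) ^ 2 :=
    funext fun ω => by rw [h.round t ht, h.step t ht]
  have hε2 : ε t ^ 2 ≤ γ ^ 2 * η t ^ 2 := by
    rw [← mul_pow]; exact pow_le_pow_left₀ (hε t).le hεη 2
  have h2η : 0 < 2 * η t := by positivity
  refine le_of_mul_le_mul_left ?_ h2η
  rw [mul_add, ← mul_assoc, mul_inv_cancel₀ h2η.ne', hnext]
  linarith

end Probability

end IsRoundedOGD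

theorem ogd_randomized_rounding_regret_general
    {Ω : Type*} [MeasurableSpace Ω] (P : Measure Ω) [IsProbabilityMeasure P]
    (T : ℕ)
    (R G γ : ℝ) (hR : 0 < R) (hγ : 0 < γ)
    (η ε : ℕ → ℝ)
    (hηpos : ∀ t, 0 < η t) (hηmono : ∀ s t, s ≤ t → η t ≤ η s)
    (hεpos : ∀ t, 0 < ε t) (hεη : ∀ t, ε t ≤ γ * η t)
    (hgrid : ∀ t, ∃ k : ℤ, R = k * ε t)
    (U : ℕ → Ω → ℝ) (hUmeas : ∀ t, Measurable (U t))
    (hUindep : iIndepFun U P)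
    (hUunif : ∀ t, P.map (U t) = volume.restrict (Set.Icc (0 : ℝ) 1))
    (A : (t : ℕ) → (Fin t → ℝ) → ℝ) (hAmeas : ∀ t, Measurable (A t))
    (βhat β g : ℕ → Ω → ℝ)
    (hinit : ∀ ω, βhat 1 ω = 0)
    (hg : ∀ t, 1 ≤ t → ∀ ω, g t ω = A t (fun s : Fin t => βhat (s.val + 1) ω))
    (hgbdd : ∀ t, 1 ≤ t → ∀ ω, |g t ω| ≤ G)
    (hstep : ∀ t, 1 ≤ t → ∀ ω,
      β (t + 1) ω = max (-R) (min R (βhat t ω - η t * g t ω)))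
    (hround : ∀ t, 1 ≤ t → ∀ ω,
      βhat (t + 1) ω = randomRound (ε t) (β (t + 1) ω) (U t ω))
    (βstar : ℝ) (hβstar : βstar ∈ Set.Icc (-R) R) :
    (∫ ω, ∑ t ∈ Finset.range T, g (t + 1) ω * (βhat (t + 1) ω - βstar) ∂P)
      ≤ (2 * R) ^ 2 / (2 * η T)
        + (1 / 2) * (G ^ 2 + γ ^ 2) * (∑ t ∈ Finset.range T, η (t + 1))
        + γ * R * Real.sqrt T := by
  have h : IsRoundedOGD R η ε U A βhat β g := ⟨hinit, hg, hstep, hround⟩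
  set D : ℕ → ℝ := fun t => ∫ ω, (βhat (t + 1) ω - βstar) ^ 2 ∂P
  have hregret (t : ℕ) := h.integral_regret_le hUmeas hUindep hUunif hAmeas hR.le hεpos hgrid
    (hηpos (t + 1)) (hεη (t + 1)) hgbdd hβstar (Nat.le_add_left 1 t)
  have hw : Monotone fun t => (2 * η t)⁻¹ := fun s t hst =>
    inv_anti₀ (by linarith [hηpos t]) (by linarith [hηmono s t hst])
  have hD (t : ℕ) : 0 ≤ D t ∧ D t ≤ (2 * R) ^ 2 :=
    ⟨integral_nonneg fun _ => sq_nonneg _,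
      h.integral_sq_sub_le hR.le hεpos hgrid hβstar (Nat.le_add_left 1 t)⟩
  rw [integral_finsetSum _ fun t _ =>
    h.integrable_mul_sub hUmeas hAmeas hR.le hεpos hgrid hgbdd hβstar (Nat.le_add_left 1 t)]
  calc ∑ t ∈ Finset.range T, ∫ ω, g (t + 1) ω * (βhat (t + 1) ω - βstar) ∂P
      ≤ ∑ t ∈ Finset.range T, ((2 * η (t + 1))⁻¹ * (D t - D (t + 1))
          + 1 / 2 * (G ^ 2 + γ ^ 2) * η (t + 1)) := Finset.sum_le_sum fun t _ => hregret t
    _ = ∑ t ∈ Finset.range T, (2 * η (t + 1))⁻¹ * (D t - D (t + 1))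
          + 1 / 2 * (G ^ 2 + γ ^ 2) * ∑ t ∈ Finset.range T, η (t + 1) := by
        rw [Finset.sum_add_distrib, Finset.mul_sum]
    _ ≤ (2 * R) ^ 2 / (2 * η T) + 1 / 2 * (G ^ 2 + γ ^ 2) * ∑ t ∈ Finset.range T, η (t + 1) := by
        rw [div_eq_mul_inv ((2 * R) ^ 2)]
        gcongr
        exact Finset.sum_range_mul_sub_succ_le hw (by have := hηpos 0; positivity)
          (fun t => (hD t).1) (fun t => (hD t).2) T
    _ ≤ _ := by
        have := mul_nonneg (mul_nonneg hγ.le hR.le) (Real.sqrt_nonneg T)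
        linarith

/-- Expected regret of one-dimensional online gradient descent with randomized rounding
on `[-R, R]` against an adaptive adversary: with a non-increasing learning-rate schedule
`η_t`, resolutions `ε_t ≤ γ η_t` whose grids contain `±R`, gradients bounded by `G`
chosen adaptively (`g_t = A_t(β̂_1, …, β̂_t)`), updates
`β_{t+1} = Π_{[-R,R]}(β̂_t - η_t g_t)` and `β̂_{t+1} = RandomRound(β_{t+1}, ε_t)` with
fresh independent uniform randomness, the expected regret over rounds `t = 1, …, T`
against any comparator `β* ∈ [-R, R]` satisfies
`E[Σ_t g_t (β̂_t - β*)] ≤ (2R)²/(2 η_T) + ½ (G² + γ²) Σ_t η_t + γ R √T`. -/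
theorem ogd_randomized_rounding_regret
    {Ω : Type*} [MeasurableSpace Ω] (P : Measure Ω) [IsProbabilityMeasure P]
    (T : ℕ) (hT : 1 ≤ T)
    (R G γ : ℝ) (hR : 0 < R) (hG : 0 ≤ G) (hγ : 0 < γ)
    (η ε : ℕ → ℝ)
    (hηpos : ∀ t, 0 < η t) (hηmono : ∀ s t, s ≤ t → η t ≤ η s)
    (hεpos : ∀ t, 0 < ε t) (hεη : ∀ t, ε t ≤ γ * η t)
    (hgrid : ∀ t, ∃ k : ℤ, R = k * ε t)
    (U : ℕ → Ω → ℝ) (hUmeas : ∀ t, Measurable (U t))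
    (hUindep : iIndepFun U P)
    (hUunif : ∀ t, P.map (U t) = volume.restrict (Set.Icc (0 : ℝ) 1))
    (A : (t : ℕ) → (Fin t → ℝ) → ℝ) (hAmeas : ∀ t, Measurable (A t))
    (βhat β g : ℕ → Ω → ℝ)
    (hinit : ∀ ω, βhat 1 ω = 0)
    (hg : ∀ t, 1 ≤ t → ∀ ω, g t ω = A t (fun s : Fin t => βhat (s.val + 1) ω))
    (hgbdd : ∀ t, 1 ≤ t → ∀ ω, |g t ω| ≤ G)
    (hstep : ∀ t, 1 ≤ t → ∀ ω,
      β (t + 1) ω = max (-R) (min R (βhat t ω - η t * g t ω)))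
    (hround : ∀ t, 1 ≤ t → ∀ ω,
      βhat (t + 1) ω = randomRound (ε t) (β (t + 1) ω) (U t ω))
    (βstar : ℝ) (hβstar : βstar ∈ Set.Icc (-R) R) :
    (∫ ω, ∑ t ∈ Finset.range T, g (t + 1) ω * (βhat (t + 1) ω - βstar) ∂P)
      ≤ (2 * R) ^ 2 / (2 * η T)
        + (1 / 2) * (G ^ 2 + γ ^ 2) * (∑ t ∈ Finset.range T, η (t + 1))
        + γ * R * Real.sqrt T :=
  ogd_randomized_rounding_regret_general P T R G γ hR hγ η ε hηpos hηmono hεpos hεη hgrid U hUmeas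
    hUindep hUunif A hAmeas βhat β g hinit hg hgbdd hstep hround βstar hβstar
end

section
/- Fix a base b > 1, integers T ≥ 2 and 1 ≤ t ≤ T, and a constant c > 0. Let C_{t+1} be the value of the Morris counter after t increment operations. Then P( τ̃(C_{t+1}) < t/(b·c·log T) − 1 ) ≤ 1/T^{c−1}, where log is the natural logarithm. -/
/-!
Climbing from level `k` to `k + 1` takes a geometric number of steps with parameter `b⁻ᵏ`, whose
generating function at `(1 - δ)⁻¹` is `(1 - δ bᵏ)⁻¹`. So with `φ(n) = ∏_{n ≤ k < j} (1 - δ bᵏ)⁻¹`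
for `n ≤ j` and `φ(n) = 0` above `j`, the process `φ(C_s) (1 - δ)⁻ˢ` is a supermartingale as long
as `δ ≤ b⁻ʲ`, and Markov's inequality gives `P(C_{t+1} ≤ j) ≤ φ(1) (1 - δ)ᵗ`.

With `L = c log T`, the event of the theorem is `{C_{t+1} ≤ j}` for the largest `j` with
`L τ̃(j+1) < t`. Taking `δ = (1 - λ⁻¹) b⁻ʲ` with `λ = t / τ̃(j+1) > L` and bounding each factor by
Bernoulli's inequality gives `e^{1-λ} ≤ e · e^{-L} ≤ T e^{-L} = T^{1-c}` once `T ≥ 3`; the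
remaining cases `j = 1` and `j = t = 2` are settled with `δ = b⁻ʲ`.
-/

open MeasureTheory ProbabilityTheory Real
open scoped ENNReal

noncomputable section

namespace MorrisCounter

def step (b : ℝ) (n : ℕ) (v : ℝ) : ℕ := if v < (b ^ n)⁻¹ then n + 1 else n

structure IsMorrisCounter {Ω : Type*} (b : ℝ) (V : ℕ → Ω → ℝ) (C : ℕ → Ω → ℕ) : Prop where
  start : ∀ ω, C 1 ω = 1
  succ : ∀ s, 1 ≤ s → ∀ ω, C (s + 1) ω = step b (C s ω) (V s ω)

theorem measurable_step (b : ℝ) : Measurable fun p : ℕ × ℝ => step b p.1 p.2 :=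
  measurable_from_prod_countable_right fun n =>
    (measurable_const.ite (measurableSet_Iio (a := (b ^ n)⁻¹)) measurable_const :
      Measurable fun v : ℝ => if v < (b ^ n)⁻¹ then n + 1 else n)

theorem volume_restrict_unitInterval_Iio {q : ℝ} (hq1 : q ≤ 1) :
    volume.restrict (Set.Icc (0 : ℝ) 1) (Set.Iio q) = ENNReal.ofReal q := by
  have : Set.Iio q ∩ Set.Icc 0 1 = Set.Ico 0 q := by
    ext v; simp only [Set.mem_inter_iff, Set.mem_Icc, Set.mem_Iio, Set.mem_Ico]; grind
  rw [Measure.restrict_apply measurableSet_Iio, this, Real.volume_Ico, sub_zero]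

theorem volume_restrict_unitInterval_Ici {q : ℝ} (hq0 : 0 ≤ q) (hq1 : q ≤ 1) :
    volume.restrict (Set.Icc (0 : ℝ) 1) (Set.Ici q) = ENNReal.ofReal (1 - q) := by
  have : IsProbabilityMeasure (volume.restrict (Set.Icc (0 : ℝ) 1)) := ⟨by simp⟩
  rw [← Set.compl_Iio, prob_compl_eq_one_sub measurableSet_Iio,
    volume_restrict_unitInterval_Iio hq1, ← ENNReal.ofReal_one, ENNReal.ofReal_sub _ hq0]

theorem lintegral_step {b : ℝ} (hb : 1 ≤ b) (n : ℕ) (ψ : ℕ → ℝ≥0∞) :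
    ∫⁻ v, ψ (step b n v) ∂(volume.restrict (Set.Icc (0 : ℝ) 1))
      = ENNReal.ofReal (b ^ n)⁻¹ * ψ (n + 1) + ENNReal.ofReal (1 - (b ^ n)⁻¹) * ψ n := by
  classical
  have hq1 : (b ^ n)⁻¹ ≤ 1 := inv_le_one_of_one_le₀ (one_le_pow₀ hb)
  have hψ : (fun v => ψ (step b n v))
      = (Set.Iio (b ^ n)⁻¹).piecewise (fun _ => ψ (n + 1)) (fun _ => ψ n) := by
    ext v; by_cases h : v < (b ^ n)⁻¹ <;> simp [step, Set.piecewise, h]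
  rw [hψ, lintegral_piecewise measurableSet_Iio, setLIntegral_const, setLIntegral_const,
    Set.compl_Iio, volume_restrict_unitInterval_Iio hq1,
    volume_restrict_unitInterval_Ici (by positivity) hq1, mul_comm, mul_comm (ψ n)]

theorem lintegral_comp_step_le {Ω : Type*} [MeasurableSpace Ω] {P : Measure Ω} [IsFiniteMeasure P]
    {b : ℝ} (hb : 1 ≤ b) {X : Ω → ℕ} {Y : Ω → ℝ}
    (hX : Measurable X) (hY : Measurable Y) (hXY : IndepFun X Y P)
    (hYunif : P.map Y = volume.restrict (Set.Icc (0 : ℝ) 1)) {ψ : ℕ → ℝ≥0∞} {κ : ℝ≥0∞}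
    (hψ : ∀ n, ENNReal.ofReal (b ^ n)⁻¹ * ψ (n + 1) + ENNReal.ofReal (1 - (b ^ n)⁻¹) * ψ n
      ≤ κ * ψ n) :
    ∫⁻ ω, ψ (step b (X ω) (Y ω)) ∂P ≤ κ * ∫⁻ ω, ψ (X ω) ∂P := by
  have hψm : Measurable fun p : ℕ × ℝ => ψ (step b p.1 p.2) :=
    measurable_of_countable ψ |>.comp (measurable_step b)
  calc ∫⁻ ω, ψ (step b (X ω) (Y ω)) ∂P
      = ∫⁻ p, ψ (step b p.1 p.2) ∂((P.map X).prod (P.map Y)) := by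
        rw [← (hXY.map_prod_eq_prod_map_map hX.aemeasurable hY.aemeasurable),
          lintegral_map hψm (hX.prodMk hY)]
    _ = ∫⁻ n, ∫⁻ v, ψ (step b n v) ∂(P.map Y) ∂(P.map X) :=
        lintegral_prod _ hψm.aemeasurable
    _ ≤ ∫⁻ n, κ * ψ n ∂(P.map X) :=
        lintegral_mono fun n => (hYunif ▸ lintegral_step hb n ψ).trans_le (hψ n)
    _ = κ * ∫⁻ ω, ψ (X ω) ∂P := by
        rw [lintegral_const_mul _ (measurable_of_countable ψ),
          lintegral_map (measurable_of_countable ψ) hX]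

namespace IsMorrisCounter

variable {Ω : Type*} {b : ℝ} {V : ℕ → Ω → ℝ} {C : ℕ → Ω → ℕ}

theorem one_le (hC : IsMorrisCounter b V C) {s : ℕ} (hs : 1 ≤ s) (ω : Ω) : 1 ≤ C s ω := by
  induction s, hs using Nat.le_induction with
  | base => exact (hC.start ω).ge
  | succ s hs ih => rw [hC.succ s hs ω, step]; split_ifs <;> omega

theorem measurable_past (hC : IsMorrisCounter b V C) {s : ℕ} (hs : 1 ≤ s) :
    Measurable[⨆ i ∈ Set.Iio s, MeasurableSpace.comap (V i) inferInstance] (C s) := by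
  induction s, hs using Nat.le_induction with
  | base => rw [funext hC.start]; exact measurable_const
  | succ s hs ih =>
    rw [funext (hC.succ s hs)]
    refine (measurable_step b).comp (Measurable.prodMk ?_ ?_)
    · exact ih.mono (biSup_mono fun i hi => hi.trans (Nat.lt_succ_self s)) le_rfl
    · exact (comap_measurable (V s)).mono (le_iSup₂_of_le s (Nat.lt_succ_self s) le_rfl) le_rfl

variable [MeasurableSpace Ω]

theorem measurable (hC : IsMorrisCounter b V C) (hVmeas : ∀ s, Measurable (V s)) {s : ℕ}
    (hs : 1 ≤ s) : Measurable (C s) :=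
  (hC.measurable_past hs).mono (iSup₂_le fun i _ => (hVmeas i).comap_le) le_rfl

theorem indepFun {P : Measure Ω} (hC : IsMorrisCounter b V C) (hVmeas : ∀ s, Measurable (V s))
    (hVindep : iIndepFun V P) {s : ℕ} (hs : 1 ≤ s) : IndepFun (C s) (V s) P := by
  have h := indep_iSup_of_disjoint (fun i => (hVmeas i).comap_le)
    ((iIndepFun_iff_iIndep _ _ _).1 hVindep) (S := Set.Iio s) (T := {s})
    (Set.disjoint_singleton_right.2 (lt_irrefl s))
  rw [IndepFun_iff_Indep]
  exact indep_of_indep_of_le_right (indep_of_indep_of_le_left h (hC.measurable_past hs).comap_le)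
    (le_iSup₂_of_le s rfl le_rfl)

variable {P : Measure Ω} [IsProbabilityMeasure P]

theorem lintegral_comp_le (hC : IsMorrisCounter b V C) (hb : 1 ≤ b) (hVmeas : ∀ s, Measurable (V s))
    (hVindep : iIndepFun V P) (hVunif : ∀ s, P.map (V s) = volume.restrict (Set.Icc (0 : ℝ) 1))
    {ψ : ℕ → ℝ≥0∞} {κ : ℝ≥0∞}
    (hψ : ∀ n, ENNReal.ofReal (b ^ n)⁻¹ * ψ (n + 1) + ENNReal.ofReal (1 - (b ^ n)⁻¹) * ψ n
      ≤ κ * ψ n) (t : ℕ) :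
    ∫⁻ ω, ψ (C (t + 1) ω) ∂P ≤ κ ^ t * ψ 1 := by
  induction t with
  | zero => simp [hC.start]
  | succ t ih =>
    have hs : 1 ≤ t + 1 := Nat.le_add_left 1 t
    calc ∫⁻ ω, ψ (C (t + 1 + 1) ω) ∂P = ∫⁻ ω, ψ (step b (C (t + 1) ω) (V (t + 1) ω)) ∂P := by
          simp_rw [hC.succ (t + 1) hs]
      _ ≤ κ * ∫⁻ ω, ψ (C (t + 1) ω) ∂P :=
          lintegral_comp_step_le hb (hC.measurable hVmeas hs) (hVmeas _)
            (hC.indepFun hVmeas hVindep hs) (hVunif _) hψ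
      _ ≤ κ * (κ ^ t * ψ 1) := by gcongr
      _ = κ ^ (t + 1) * ψ 1 := by ring

end IsMorrisCounter

/-- The `φ` of the supermartingale `φ(C_s) (1 - δ)⁻ˢ`. -/
def potential (b δ : ℝ) (j n : ℕ) : ℝ :=
  if n ≤ j then ∏ k ∈ Finset.Ico n j, (1 - δ * b ^ k)⁻¹ else 0

section Potential

variable {b δ : ℝ} {j : ℕ}

theorem one_sub_mul_pow_pos (hb : 1 < b) (hδ : δ ≤ (b ^ j)⁻¹) {k : ℕ} (hk : k < j) :
    0 < 1 - δ * b ^ k := by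
  have : δ * b ^ k < 1 := by
    calc δ * b ^ k ≤ (b ^ j)⁻¹ * b ^ k := by gcongr
      _ < (b ^ j)⁻¹ * b ^ j := by gcongr
      _ = 1 := inv_mul_cancel₀ (by positivity)
  linarith

theorem potential_nonneg (hb : 1 < b) (hδ : δ ≤ (b ^ j)⁻¹) (n : ℕ) : 0 ≤ potential b δ j n := by
  unfold potential
  split_ifs
  · exact Finset.prod_nonneg fun k hk =>
      (inv_pos.2 (one_sub_mul_pow_pos hb hδ (Finset.mem_Ico.1 hk).2)).le
  · exact le_rfl

theorem one_le_potential (hb : 1 < b) (hδ0 : 0 ≤ δ) (hδ : δ ≤ (b ^ j)⁻¹) {n : ℕ} (hn : n ≤ j) :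
    1 ≤ potential b δ j n := by
  rw [potential, if_pos hn]
  calc (1 : ℝ) = ∏ _k ∈ Finset.Ico n j, (1 : ℝ) := Finset.prod_const_one.symm
    _ ≤ _ := Finset.prod_le_prod (fun _ _ => zero_le_one) fun k hk => by
      have hpos := one_sub_mul_pow_pos hb hδ (Finset.mem_Ico.1 hk).2
      have hδk : 0 ≤ δ * b ^ k := mul_nonneg hδ0 (pow_nonneg (zero_le_one.trans hb.le) k)
      exact (one_le_inv₀ hpos).2 (by linarith)

theorem potential_drift (hb : 1 < b) (hδ : δ ≤ (b ^ j)⁻¹) (n : ℕ) :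
    (b ^ n)⁻¹ * potential b δ j (n + 1) + (1 - (b ^ n)⁻¹) * potential b δ j n
      ≤ (1 - δ) * potential b δ j n := by
  rcases lt_trichotomy n j with hn | rfl | hn
  · have hpos := one_sub_mul_pow_pos hb hδ hn
    have hrec : potential b δ j n = (1 - δ * b ^ n)⁻¹ * potential b δ j (n + 1) := by
      rw [potential, potential, if_pos hn.le, if_pos (Nat.succ_le_of_lt hn),
        Finset.prod_eq_prod_Ico_succ_bot hn]
    have hexact :
        (b ^ n)⁻¹ + (1 - (b ^ n)⁻¹) * (1 - δ * b ^ n)⁻¹ = (1 - δ) * (1 - δ * b ^ n)⁻¹ := by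
      have : 1 - b ^ n * δ ≠ 0 := by rw [mul_comm]; exact hpos.ne'
      field_simp
      ring
    rw [hrec]
    exact le_of_eq (by linear_combination potential b δ j (n + 1) * hexact)
  · rw [potential, potential, if_pos le_rfl, if_neg (by omega), Finset.Ico_self,
      Finset.prod_empty]
    linarith
  · simp only [potential, if_neg hn.not_ge, if_neg (by omega : ¬ n + 1 ≤ j), mul_zero, add_zero,
      le_refl]

end Potential

theorem IsMorrisCounter.measure_le_level_le {Ω : Type*} [MeasurableSpace Ω] {P : Measure Ω}
    [IsProbabilityMeasure P] {b : ℝ} {V : ℕ → Ω → ℝ} {C : ℕ → Ω → ℕ}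
    (hC : IsMorrisCounter b V C) (hb : 1 < b) (hVmeas : ∀ s, Measurable (V s))
    (hVindep : iIndepFun V P) (hVunif : ∀ s, P.map (V s) = volume.restrict (Set.Icc (0 : ℝ) 1))
    {j : ℕ} (hj : 1 ≤ j) {δ : ℝ} (hδ0 : 0 ≤ δ) (hδ : δ ≤ (b ^ j)⁻¹) (t : ℕ) :
    P {ω | C (t + 1) ω ≤ j}
      ≤ ENNReal.ofReal ((∏ k ∈ Finset.Ico 1 j, (1 - δ * b ^ k)⁻¹) * (1 - δ) ^ t) := by
  have hδ1 : δ ≤ 1 := hδ.trans (inv_le_one_of_one_le₀ (one_le_pow₀ hb.le))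
  set ψ : ℕ → ℝ≥0∞ := fun n => ENNReal.ofReal (potential b δ j n)
  have hdrift : ∀ n, ENNReal.ofReal (b ^ n)⁻¹ * ψ (n + 1) + ENNReal.ofReal (1 - (b ^ n)⁻¹) * ψ n
      ≤ ENNReal.ofReal (1 - δ) * ψ n := by
    intro n
    have hq1 : (b ^ n)⁻¹ ≤ 1 := inv_le_one_of_one_le₀ (one_le_pow₀ hb.le)
    simp only [ψ]
    rw [← ENNReal.ofReal_mul (by positivity), ← ENNReal.ofReal_mul (by linarith),
      ← ENNReal.ofReal_add (mul_nonneg (by positivity) (potential_nonneg hb hδ _))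
        (mul_nonneg (by linarith) (potential_nonneg hb hδ _)),
      ← ENNReal.ofReal_mul (by linarith)]
    exact ENNReal.ofReal_le_ofReal (potential_drift hb hδ n)
  calc P {ω | C (t + 1) ω ≤ j}
      = ∫⁻ ω, {ω | C (t + 1) ω ≤ j}.indicator 1 ω ∂P :=
        (lintegral_indicator_one
          ((hC.measurable hVmeas (Nat.le_add_left 1 t)) measurableSet_Iic)).symm
    _ ≤ ∫⁻ ω, ψ (C (t + 1) ω) ∂P := lintegral_mono fun ω => by
        by_cases h : C (t + 1) ω ≤ j
        · simpa [h, ψ] using one_le_potential hb hδ0 hδ h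
        · simp [h]
    _ ≤ ENNReal.ofReal (1 - δ) ^ t * ψ 1 :=
        hC.lintegral_comp_le hb.le hVmeas hVindep hVunif hdrift t
    _ = _ := by
        rw [← ENNReal.ofReal_pow (by linarith), ← ENNReal.ofReal_mul (by positivity), mul_comm]
        simp only [potential, if_pos hj]

/-- The count estimate `τ̃(n)`. -/
def estimate (b : ℝ) (n : ℕ) : ℝ := (b ^ n - b) / (b - 1)

section Estimate

variable {b : ℝ}

theorem estimate_one : estimate b 1 = 0 := by simp [estimate]

theorem estimate_succ (hb : b ≠ 1) (n : ℕ) : estimate b (n + 1) = estimate b n + b ^ n := by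
  have : b - 1 ≠ 0 := sub_ne_zero.2 hb
  simp only [estimate]
  field_simp
  ring

theorem estimate_succ_eq_mul (hb : b ≠ 1) (n : ℕ) :
    estimate b (n + 1) = b * (estimate b n + 1) := by
  have : b - 1 ≠ 0 := sub_ne_zero.2 hb
  simp only [estimate]
  field_simp
  ring

theorem estimate_eq_sum (hb : b ≠ 1) {n : ℕ} (hn : 1 ≤ n) :
    estimate b n = ∑ k ∈ Finset.Ico 1 n, b ^ k := by
  rw [geom_sum_Ico hb hn, pow_one, estimate]

theorem strictMono_estimate (hb : 1 < b) : StrictMono (estimate b) :=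
  strictMono_nat_of_lt_succ fun n => by
    rw [estimate_succ hb.ne']; linarith [pow_pos (zero_lt_one.trans hb) n]

theorem exists_lt_estimate (hb : 1 < b) (y : ℝ) : ∃ n, y < estimate b n := by
  obtain ⟨n, hn⟩ := pow_unbounded_of_one_lt (y * (b - 1) + b) hb
  exact ⟨n, by rw [estimate, lt_div_iff₀ (sub_pos.2 hb)]; linarith⟩

theorem estimate_lt_div_sub_one_iff (hb : 1 < b) {L : ℝ} (hL : 0 < L) (n : ℕ) (x : ℝ) :
    estimate b n < x / (b * L) - 1 ↔ L * estimate b (n + 1) < x := by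
  rw [estimate_succ_eq_mul hb.ne', lt_sub_iff_add_lt, lt_div_iff₀ (by positivity),
    show L * (b * (estimate b n + 1)) = (estimate b n + 1) * (b * L) by ring]

theorem exists_forall_mul_estimate_lt_iff (hb : 1 < b) {L : ℝ} (hL : 0 < L) (x : ℝ) :
    ∃ m : ℕ, ∀ n, L * estimate b (n + 1) < x ↔ n < m := by
  classical
  have hmono := (strictMono_estimate hb).monotone
  have h : ∃ n, x ≤ L * estimate b (n + 1) := by
    obtain ⟨n, hn⟩ := exists_lt_estimate hb (x / L)
    refine ⟨n, ?_⟩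
    rw [div_lt_iff₀' hL] at hn
    exact hn.le.trans (by gcongr; exact hmono (Nat.le_succ n))
  refine ⟨Nat.find h, fun n => ⟨fun hn => lt_of_not_ge fun hge => ?_, fun hn => ?_⟩⟩
  · exact (Nat.find_spec h).not_gt (hn.trans_le' (by gcongr; exact hmono (by omega)))
  · exact lt_of_not_ge (Nat.find_min h hn)

theorem one_sub_pow_le_exp {δ : ℝ} (hδ : δ ≤ 1) (t : ℕ) : (1 - δ) ^ t ≤ exp (-(δ * t)) := by
  rw [show -(δ * t) = t * -δ by ring, exp_nat_mul]
  exact pow_le_pow_left₀ (by linarith) (by linarith [add_one_le_exp (-δ)]) t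

theorem inv_one_sub_mul_le_rpow {lam x : ℝ} (hlam : 1 ≤ lam) (hx0 : 0 ≤ x) (hx1 : x ≤ 1) :
    (1 - (1 - lam⁻¹) * x)⁻¹ ≤ lam ^ x := by
  have hlam0 : 0 < lam := zero_lt_one.trans_le hlam
  have hbern : lam⁻¹ ^ x ≤ 1 - (1 - lam⁻¹) * x := by
    have := rpow_one_add_le_one_add_mul_self (s := lam⁻¹ - 1)
      (by linarith [inv_pos.2 hlam0]) hx0 hx1
    rw [add_sub_cancel] at this
    linarith
  rw [← inv_inv (lam ^ x), ← inv_rpow hlam0.le]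
  exact inv_anti₀ (rpow_pos_of_pos (inv_pos.2 hlam0) x) hbern

theorem one_sub_inv_div_pow_mem_Icc {lam : ℝ} (hb : 0 < b) (hlam : 1 ≤ lam) (j : ℕ) :
    (1 - lam⁻¹) / b ^ j ∈ Set.Icc 0 (b ^ j)⁻¹ := by
  have hinv : 0 < lam⁻¹ ∧ lam⁻¹ ≤ 1 := ⟨by positivity, inv_le_one_of_one_le₀ hlam⟩
  have hbj : 0 < b ^ j := pow_pos hb j
  rw [div_eq_mul_inv]
  exact ⟨by nlinarith [inv_pos.2 hbj], mul_le_of_le_one_left (inv_pos.2 hbj).le (by linarith)⟩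

theorem chernoff_le_exp {lam : ℝ} {j t : ℕ} (hb : 1 < b) (hj : 1 ≤ j) (hlam : 1 ≤ lam)
    (ht : lam * estimate b (j + 1) = t) :
    (∏ k ∈ Finset.Ico 1 j, (1 - (1 - lam⁻¹) / b ^ j * b ^ k)⁻¹) * (1 - (1 - lam⁻¹) / b ^ j) ^ t
      ≤ exp (1 - lam) := by
  have hb0 : 0 < b := zero_lt_one.trans hb
  have hbj : 0 < b ^ j := pow_pos hb0 j
  have hlam0 : 0 < lam := zero_lt_one.trans_le hlam
  have hδ := (one_sub_inv_div_pow_mem_Icc hb0 hlam j).2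
  have hδ1 : (1 - lam⁻¹) / b ^ j ≤ 1 := hδ.trans (inv_le_one_of_one_le₀ (one_le_pow₀ hb.le))
  set a := estimate b j / b ^ j
  have ha : 0 ≤ a := div_nonneg (by rw [estimate_eq_sum hb.ne' hj]; positivity) hbj.le
  have hprod : ∏ k ∈ Finset.Ico 1 j, (1 - (1 - lam⁻¹) / b ^ j * b ^ k)⁻¹ ≤ exp (log lam * a) := by
    calc ∏ k ∈ Finset.Ico 1 j, (1 - (1 - lam⁻¹) / b ^ j * b ^ k)⁻¹
        ≤ ∏ k ∈ Finset.Ico 1 j, exp (log lam * (b ^ k / b ^ j)) := by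
          refine Finset.prod_le_prod (fun k hk => ?_) fun k hk => ?_
          · exact (inv_pos.2 (one_sub_mul_pow_pos hb hδ (Finset.mem_Ico.1 hk).2)).le
          · have hk : b ^ k ≤ b ^ j := pow_le_pow_right₀ hb.le (Finset.mem_Ico.1 hk).2.le
            rw [← rpow_def_of_pos hlam0, div_mul_eq_mul_div, mul_div_assoc]
            exact inv_one_sub_mul_le_rpow hlam (by positivity) ((div_le_one hbj).2 hk)
      _ = exp (log lam * a) := by
          rw [← exp_sum, ← Finset.mul_sum, ← Finset.sum_div, ← estimate_eq_sum hb.ne' hj]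
  have hpow := one_sub_pow_le_exp (δ := (1 - lam⁻¹) / b ^ j) hδ1 t
  have hδt : (1 - lam⁻¹) / b ^ j * t = (lam - 1) * (1 + a) := by
    rw [← ht, estimate_succ hb.ne']
    simp only [a]
    field_simp
    ring
  have hlog : log lam ≤ lam - 1 := log_le_sub_one_of_pos hlam0
  calc _ ≤ exp (log lam * a) * exp (-((1 - lam⁻¹) / b ^ j * t)) :=
        mul_le_mul hprod hpow (pow_nonneg (by linarith) t) (exp_nonneg _)
    _ = exp (a * (log lam - (lam - 1)) + (1 - lam)) := by rw [← exp_add, hδt]; ring_nf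
    _ ≤ exp (1 - lam) := by
        gcongr
        nlinarith

theorem estimate_three (hb : b ≠ 1) : estimate b 3 = b + b ^ 2 := by
  rw [estimate_succ hb, estimate_succ hb, estimate_one, pow_one, zero_add]

theorem chernoff_level_two_le {L : ℝ} (hb : 1 < b) (hL : log 2 < L) (hLb : L * estimate b 3 < 2) :
    (∏ k ∈ Finset.Ico 1 2, (1 - (b ^ 2)⁻¹ * b ^ k)⁻¹) * (1 - (b ^ 2)⁻¹) ^ 2 ≤ 2 * exp (-L) := by
  rw [estimate_three hb.ne'] at hLb
  have hlog2 := log_two_gt_d9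
  have hL1 : L < 1 := by nlinarith
  -- `b + b² < 2 / log 2` forces `b < 1.271`, where `(b + 1)² (b - 1) / b³ ≤ 2 / e` still holds.
  have hb1271 : b < 1.271 := by nlinarith
  have hlhs : (∏ k ∈ Finset.Ico 1 2, (1 - (b ^ 2)⁻¹ * b ^ k)⁻¹) * (1 - (b ^ 2)⁻¹) ^ 2
      = (b + 1) ^ 2 * (b - 1) / b ^ 3 := by
    have : b - 1 ≠ 0 := sub_ne_zero.2 hb.ne'
    rw [show Finset.Ico 1 2 = {1} from rfl, Finset.prod_singleton]
    field_simp
    ring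
  have hpoly : (b + 1) ^ 2 * (b - 1) * exp 1 ≤ 2 * b ^ 3 := by
    have he := exp_one_lt_d9
    have hpos : 0 ≤ (b + 1) ^ 2 * (b - 1) := by nlinarith
    have h2 : 0 ≤ (1.271 - b) * (b - 1) ^ 2 := by nlinarith
    nlinarith [mul_le_mul_of_nonneg_left he.le hpos]
  calc _ = (b + 1) ^ 2 * (b - 1) / b ^ 3 := hlhs
    _ ≤ 2 * exp (-1) := by
        rw [div_le_iff₀ (by positivity), exp_neg,
          show 2 * (exp 1)⁻¹ * b ^ 3 = 2 * b ^ 3 / exp 1 by ring, le_div_iff₀ (exp_pos 1)]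
        exact hpoly
    _ ≤ 2 * exp (-L) := by gcongr

theorem chernoff_level_one_le {L : ℝ} {t : ℕ} (hb : 1 < b) (hLt : L * estimate b 2 < t) :
    (∏ k ∈ Finset.Ico 1 1, (1 - (b ^ 1)⁻¹ * b ^ k)⁻¹) * (1 - (b ^ 1)⁻¹) ^ t ≤ exp (-L) := by
  rw [estimate_succ hb.ne', estimate_one, zero_add, pow_one] at hLt
  rw [Finset.Ico_self, Finset.prod_empty, one_mul]
  calc (1 - (b ^ 1)⁻¹) ^ t ≤ exp (-((b ^ 1)⁻¹ * t)) :=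
        one_sub_pow_le_exp (inv_le_one_of_one_le₀ (one_le_pow₀ hb.le)) t
    _ ≤ exp (-L) := by
        gcongr
        rw [pow_one, inv_mul_eq_div, le_div_iff₀ (zero_lt_one.trans hb)]
        linarith

theorem exists_chernoff_le_exp_one_sub {L : ℝ} {j t : ℕ} (hb : 1 < b) (hj : 1 ≤ j)
    (hL : 1 ≤ L) (hLt : L * estimate b (j + 1) < t) :
    ∃ δ, 0 ≤ δ ∧ δ ≤ (b ^ j)⁻¹ ∧
      (∏ k ∈ Finset.Ico 1 j, (1 - δ * b ^ k)⁻¹) * (1 - δ) ^ t ≤ exp (1 - L) := by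
  have hμ : 0 < estimate b (j + 1) :=
    estimate_one (b := b) ▸ strictMono_estimate hb (by omega : 1 < j + 1)
  set lam := (t : ℝ) / estimate b (j + 1)
  have hLlam : L < lam := by rw [lt_div_iff₀ hμ]; exact hLt
  obtain ⟨hδ0, hδ⟩ := one_sub_inv_div_pow_mem_Icc (zero_lt_one.trans hb) (by linarith : 1 ≤ lam) j
  refine ⟨(1 - lam⁻¹) / b ^ j, hδ0, hδ, ?_⟩
  calc _ ≤ exp (1 - lam) := chernoff_le_exp hb hj (by linarith) (by simp only [lam]; field_simp)
    _ ≤ exp (1 - L) := by gcongr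

theorem eq_two_of_mul_estimate_lt {L : ℝ} {j t : ℕ} (hb : 1 < b) (hj : 2 ≤ j) (ht : t ≤ 2)
    (hL : log 2 < L) (hLt : L * estimate b (j + 1) < t) : j = 2 ∧ t = 2 := by
  have hmono := (strictMono_estimate hb).monotone
  have hlog2 := log_two_gt_d9
  have h3 : 2 < estimate b 3 := by rw [estimate_three hb.ne']; nlinarith
  have h4 : 3 < estimate b 4 := by
    rw [estimate_succ hb.ne']; nlinarith [one_lt_pow₀ hb (by norm_num : (3 : ℕ) ≠ 0)]
  have ht' : (t : ℝ) ≤ 2 := by exact_mod_cast ht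
  have ht2 : t = 2 := by
    have : (1 : ℝ) < t := by nlinarith [hmono (by omega : 3 ≤ j + 1)]
    have : 1 < t := by exact_mod_cast this
    omega
  refine ⟨?_, ht2⟩
  by_contra hj3
  nlinarith [hmono (by omega : 4 ≤ j + 1)]

theorem exists_chernoff_le {L : ℝ} {j t T : ℕ} (hb : 1 < b) (hj : 1 ≤ j) (hT : 2 ≤ T)
    (htT : t ≤ T) (hL : log T < L) (hLt : L * estimate b (j + 1) < t) :
    ∃ δ, 0 ≤ δ ∧ δ ≤ (b ^ j)⁻¹ ∧
      (∏ k ∈ Finset.Ico 1 j, (1 - δ * b ^ k)⁻¹) * (1 - δ) ^ t ≤ T * exp (-L) := by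
  have hT2 : (2 : ℝ) ≤ T := by exact_mod_cast hT
  have hexpT : exp (-L) ≤ T * exp (-L) := le_mul_of_one_le_left (exp_nonneg _) (by linarith)
  rcases (by omega : j = 1 ∨ (2 ≤ j ∧ 3 ≤ t) ∨ (2 ≤ j ∧ t ≤ 2)) with rfl | ⟨hj2, ht3⟩ | ⟨hj2, ht2⟩
  · exact ⟨(b ^ 1)⁻¹, by positivity, le_rfl, (chernoff_level_one_le hb hLt).trans hexpT⟩
  · have hT3 : (3 : ℝ) ≤ T := by exact_mod_cast ht3.trans htT
    have he := exp_one_lt_d9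
    have hL1 : 1 ≤ L := by
      refine le_of_lt (lt_of_le_of_lt ?_ hL)
      rw [le_log_iff_exp_le (by linarith)]
      linarith
    obtain ⟨δ, hδ0, hδ, hbound⟩ := exists_chernoff_le_exp_one_sub hb hj hL1 hLt
    refine ⟨δ, hδ0, hδ, hbound.trans ?_⟩
    rw [sub_eq_add_neg, exp_add]
    gcongr
    linarith
  · have hlog2 : log 2 < L := (log_le_log two_pos hT2).trans_lt hL
    obtain ⟨rfl, rfl⟩ := eq_two_of_mul_estimate_lt hb hj2 ht2 hlog2 hLt
    exact ⟨(b ^ 2)⁻¹, by positivity, le_rfl,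
      (chernoff_level_two_le hb hlog2 (by exact_mod_cast hLt)).trans (by gcongr)⟩

end Estimate

theorem one_div_rpow_sub_one_eq {T : ℝ} (hT : 0 < T) (c : ℝ) :
    1 / T ^ (c - 1) = T * exp (-(c * log T)) := by
  rw [one_div, ← rpow_neg hT.le, neg_sub, rpow_def_of_pos hT, mul_sub, mul_one, sub_eq_add_neg,
    exp_add, exp_log hT, mul_comm (log _)]

theorem IsMorrisCounter.measure_estimate_lt_le {Ω : Type*} [MeasurableSpace Ω] {P : Measure Ω}
    [IsProbabilityMeasure P] {b : ℝ} {V : ℕ → Ω → ℝ} {C : ℕ → Ω → ℕ}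
    (hC : IsMorrisCounter b V C) (hb : 1 < b) (hVmeas : ∀ s, Measurable (V s))
    (hVindep : iIndepFun V P) (hVunif : ∀ s, P.map (V s) = volume.restrict (Set.Icc (0 : ℝ) 1))
    {T t : ℕ} (hT : 2 ≤ T) (htT : t ≤ T) {L : ℝ} (hL : log T < L) :
    P {ω | estimate b (C (t + 1) ω) < t / (b * L) - 1} ≤ ENNReal.ofReal (T * exp (-L)) := by
  have hL0 : 0 < L := (log_pos (by exact_mod_cast hT)).trans hL
  obtain ⟨m, hm⟩ := exists_forall_mul_estimate_lt_iff hb hL0 (t : ℝ)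
  simp_rw [estimate_lt_div_sub_one_iff hb hL0, hm]
  rcases Nat.lt_or_ge m 2 with hm2 | hm2
  · have hempty : {ω | C (t + 1) ω < m} = ∅ :=
      Set.eq_empty_of_forall_notMem fun ω hω => by
        have := hC.one_le (Nat.le_add_left 1 t) ω
        rw [Set.mem_ofPred_eq] at hω
        omega
    simp [hempty]
  obtain ⟨j, rfl⟩ : ∃ j, m = j + 1 := ⟨m - 1, by omega⟩
  obtain ⟨δ, hδ0, hδ, hbound⟩ :=
    exists_chernoff_le hb (by omega) hT htT hL ((hm j).2 (Nat.lt_succ_self j))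
  simp_rw [Nat.lt_succ_iff]
  exact (hC.measure_le_level_le hb hVmeas hVindep hVunif (by omega) hδ0 hδ t).trans
    (ENNReal.ofReal_le_ofReal hbound)

end MorrisCounter

end

open MorrisCounter

theorem morris_counter_lower_deviation_general
    {Ω : Type*} [MeasurableSpace Ω] (P : Measure Ω) [IsProbabilityMeasure P]
    (b : ℝ) (hb : 1 < b) (T t : ℕ) (hT : 2 ≤ T) (htT : t ≤ T)
    (c : ℝ)
    (V : ℕ → Ω → ℝ) (hVmeas : ∀ s, Measurable (V s))
    (hVindep : iIndepFun V P)
    (hVunif : ∀ s, P.map (V s) = volume.restrict (Set.Icc (0 : ℝ) 1))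
    (C : ℕ → Ω → ℕ)
    (hC1 : ∀ ω, C 1 ω = 1)
    (hCstep : ∀ s, 1 ≤ s → ∀ ω,
      C (s + 1) ω = if V s ω < (b ^ C s ω)⁻¹ then C s ω + 1 else C s ω) :
    P {ω | (b ^ C (t + 1) ω - b) / (b - 1) < (t : ℝ) / (b * c * Real.log T) - 1}
      ≤ ENNReal.ofReal (1 / (T : ℝ) ^ (c - 1)) := by
  have hT1 : (1 : ℝ) < T := by exact_mod_cast hT
  rcases le_or_gt c 1 with hc | hc
  · exact prob_le_one.trans (ENNReal.one_le_ofReal.2 (one_le_one_div (by positivity)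
      (rpow_le_one_of_one_le_of_nonpos hT1.le (by linarith))))
  rw [one_div_rpow_sub_one_eq (by positivity), mul_assoc]
  exact IsMorrisCounter.measure_estimate_lt_le ⟨hC1, hCstep⟩ hb hVmeas hVindep hVunif hT htT
    (lt_mul_of_one_lt_left (log_pos hT1) hc)

/-- Lower-deviation bound for the Morris counter: after `t ≤ T` increments with base
`b > 1`, the estimate `τ̃(C_{t+1}) = (b^{C_{t+1}} - b)/(b - 1)` satisfies
`P(τ̃(C_{t+1}) < t/(b c log T) - 1) ≤ 1/T^{c-1}` for every `c > 0`. -/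
theorem morris_counter_lower_deviation
    {Ω : Type*} [MeasurableSpace Ω] (P : Measure Ω) [IsProbabilityMeasure P]
    (b : ℝ) (hb : 1 < b) (T t : ℕ) (hT : 2 ≤ T) (ht1 : 1 ≤ t) (htT : t ≤ T)
    (c : ℝ) (hc : 0 < c)
    (V : ℕ → Ω → ℝ) (hVmeas : ∀ s, Measurable (V s))
    (hVindep : iIndepFun V P)
    (hVunif : ∀ s, P.map (V s) = volume.restrict (Set.Icc (0 : ℝ) 1))
    (C : ℕ → Ω → ℕ) (hCmeas : ∀ s, Measurable (C s))
    (hC1 : ∀ ω, C 1 ω = 1)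
    (hCstep : ∀ s, 1 ≤ s → ∀ ω,
      C (s + 1) ω = if V s ω < (b ^ C s ω)⁻¹ then C s ω + 1 else C s ω) :
    P {ω | (b ^ C (t + 1) ω - b) / (b - 1) < (t : ℝ) / (b * c * Real.log T) - 1}
      ≤ ENNReal.ofReal (1 / (T : ℝ) ^ (c - 1)) :=
  morris_counter_lower_deviation_general P b hb T t hT htT c V hVmeas hVindep hVunif C hC1 hCstep
end

section
/- Fix a base b > 1, integers T ≥ 2 and 1 ≤ t ≤ T, and a constant c > 0. Let C_{t+1} be the value of the Morris counter after t increment operations. Then P( τ̃(C_{t+1}) > (e·t/(b − 1))·b^{√(2·c·log_b T) + 2} ) ≤ 1/T^{c}. -/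
/-!
If the counter climbs from level `n` to level `n + m` within `u` steps, then each of the levels
`n, …, n + m - 1` is left at its own step, at which the uniform draw fell below the increment
probability of that level. A union bound over the at most `u ^ m` choices of these steps,
together with independence, gives `P(C_{u+1} ≥ n + m) ≤ u ^ m ∏_{j < m} b^{-(n+j)}`.
The threshold in the theorem forces `C_{t+1} ≥ n + m` for `n = ⌊log_b t⌋ + 2` and
`m = ⌊√(2 c log_b T)⌋ + 1`; since `t b ≤ b^n`, the bound is at most
`b^{-m(m+1)/2} ≤ T^{-c}`.
-/

open MeasureTheory ProbabilityTheory Finset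

def IsCounterPath (p : ℕ → ℝ) (V : ℕ → ℝ) (C : ℕ → ℕ) : Prop :=
  ∀ s, 1 ≤ s → C (s + 1) = if V s < p (C s) then C s + 1 else C s

namespace IsCounterPath

variable {p : ℕ → ℝ} {V : ℕ → ℝ} {C : ℕ → ℕ}

theorem exists_step_eq_of_lt (h : IsCounterPath p V C) {ℓ : ℕ} (hℓ : C 1 ≤ ℓ) :
    ∀ {u : ℕ}, ℓ < C (u + 1) → ∃ s ∈ Icc 1 u, C s = ℓ ∧ V s < p ℓ
  | 0, hlt => absurd hlt (not_lt.2 hℓ)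
  | u + 1, hlt => by
    by_cases hu : ℓ < C (u + 1)
    · obtain ⟨s, hs, hCs, hVs⟩ := exists_step_eq_of_lt h hℓ hu
      exact ⟨s, Icc_subset_Icc_right u.le_succ hs, hCs, hVs⟩
    · have hstep := h (u + 1) (Nat.le_add_left 1 u)
      split_ifs at hstep with hV
      · obtain rfl : C (u + 1) = ℓ := by omega
        exact ⟨u + 1, by simp, rfl, hV⟩
      · omega

theorem exists_injective_steps (h : IsCounterPath p V C) {u n m : ℕ} (hn : C 1 ≤ n)
    (hm : n + m ≤ C (u + 1)) :
    ∃ s ∈ (Fintype.piFinset fun _ : Fin m => Icc 1 u).filter Function.Injective,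
      ∀ j, V (s j) < p (n + j) := by
  have hsteps : ∀ j : Fin m, ∃ s ∈ Icc 1 u, C s = n + j ∧ V s < p (n + j) :=
    fun j => h.exists_step_eq_of_lt (by omega) (by omega)
  choose s hs hCs hVs using hsteps
  refine ⟨s, mem_filter.2 ⟨Fintype.mem_piFinset.2 hs, fun i j hij => ?_⟩, hVs⟩
  have := (hCs i).symm.trans ((congrArg C hij).trans (hCs j))
  exact Fin.ext (by omega)

end IsCounterPath

section Probability

variable {Ω : Type*} [MeasurableSpace Ω] {P : Measure Ω}

theorem measure_preimage_Iio_le_of_map_eq_uniform {X : Ω → ℝ} (hX : Measurable X)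
    (hunif : P.map X = volume.restrict (Set.Icc 0 1)) (x : ℝ) :
    P (X ⁻¹' Set.Iio x) ≤ ENNReal.ofReal x := by
  rw [← Measure.map_apply hX measurableSet_Iio, hunif, Measure.restrict_apply measurableSet_Iio]
  calc volume (Set.Iio x ∩ Set.Icc 0 1) ≤ volume (Set.Ico 0 x) :=
        measure_mono fun y ⟨hyx, hy0, _⟩ => ⟨hy0, hyx⟩
    _ = ENNReal.ofReal x := by rw [Real.volume_Ico, sub_zero]

theorem measure_iInter_preimage_Iio_le {ι κ : Type*} [Fintype ι] {V : κ → Ω → ℝ}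
    (hmeas : ∀ k, Measurable (V k)) (hindep : iIndepFun V P)
    (hunif : ∀ k, P.map (V k) = volume.restrict (Set.Icc 0 1))
    {s : ι → κ} (hs : s.Injective) (x : ι → ℝ) :
    P (⋂ i, V (s i) ⁻¹' Set.Iio (x i)) ≤ ∏ i, ENNReal.ofReal (x i) := by
  rw [(hindep.precomp hs).meas_iInter fun i => ⟨Set.Iio (x i), measurableSet_Iio, rfl⟩]
  exact prod_le_prod' fun i _ => measure_preimage_Iio_le_of_map_eq_uniform (hmeas _) (hunif _) _

theorem measure_counter_ge_add_le {V : ℕ → Ω → ℝ} {C : ℕ → Ω → ℕ} {p : ℕ → ℝ} {n : ℕ}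
    (hmeas : ∀ k, Measurable (V k)) (hindep : iIndepFun V P)
    (hunif : ∀ k, P.map (V k) = volume.restrict (Set.Icc 0 1))
    (hC : ∀ ω, IsCounterPath p (V · ω) (C · ω)) (hn : ∀ ω, C 1 ω ≤ n) (u m : ℕ) :
    P {ω | n + m ≤ C (u + 1) ω} ≤ u ^ m * ∏ j : Fin m, ENNReal.ofReal (p (n + j)) := by
  set S := (Fintype.piFinset fun _ : Fin m => Icc 1 u).filter Function.Injective
  have hsub :
      {ω | n + m ≤ C (u + 1) ω} ⊆ ⋃ s ∈ S, ⋂ j, V (s j) ⁻¹' Set.Iio (p (n + j)) := by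
    intro ω hω
    obtain ⟨s, hs, hV⟩ := (hC ω).exists_injective_steps (hn ω) hω
    exact Set.mem_biUnion hs (Set.mem_iInter.2 hV)
  have hcard : (#S : ENNReal) ≤ u ^ m := by
    exact_mod_cast (card_filter_le _ _).trans (by simp)
  calc P {ω | n + m ≤ C (u + 1) ω}
      ≤ ∑ s ∈ S, P (⋂ j, V (s j) ⁻¹' Set.Iio (p (n + j))) :=
        (measure_mono hsub).trans (measure_biUnion_finset_le S _)
    _ ≤ ∑ _s ∈ S, ∏ j : Fin m, ENNReal.ofReal (p (n + j)) :=
        sum_le_sum fun s hs =>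
          measure_iInter_preimage_Iio_le hmeas hindep hunif (mem_filter.1 hs).2 _
    _ ≤ u ^ m * ∏ j : Fin m, ENNReal.ofReal (p (n + j)) := by
        rw [sum_const, nsmul_eq_mul]
        gcongr

end Probability

theorem sum_fin_add_one_mul_two (m : ℕ) : (∑ j : Fin m, ((j : ℕ) + 1)) * 2 = m * (m + 1) := by
  rw [Fin.sum_univ_eq_sum_range (· + 1), ← add_zero (∑ j ∈ range m, (j + 1)),
    ← sum_range_succ' (fun j => j) m, sum_range_id_mul_two, Nat.add_sub_cancel, mul_comm]

theorem mul_le_sum_fin_floor_sqrt_add_one {c L : ℝ} (h : 0 ≤ c * L) :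
    c * L ≤ ((∑ j : Fin (⌊√(2 * c * L)⌋₊ + 1), ((j : ℕ) + 1) : ℕ) : ℝ) := by
  set a := √(2 * c * L)
  set m := ⌊a⌋₊ + 1
  have ha2 : a ^ 2 = 2 * c * L := Real.sq_sqrt (by linarith)
  have ham : a < m := by simpa [m] using Nat.lt_floor_add_one a
  have hS : ((∑ j : Fin m, ((j : ℕ) + 1) : ℕ) : ℝ) * 2 = m * (m + 1) := by
    exact_mod_cast sum_fin_add_one_mul_two m
  nlinarith [Real.sqrt_nonneg (2 * c * L)]

theorem pow_mul_prod_inv_pow_le {b x : ℝ} (hb : 0 < b) (hx : 0 ≤ x) {n : ℕ}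
    (hxn : x * b ≤ b ^ n) (m : ℕ) :
    x ^ m * ∏ j : Fin m, (b ^ (n + j))⁻¹ ≤ (b ^ ∑ j : Fin m, ((j : ℕ) + 1))⁻¹ := by
  rw [← Fin.prod_const, ← prod_mul_distrib, ← prod_pow_eq_pow_sum, ← prod_inv_distrib]
  refine prod_le_prod (fun j _ => by positivity) fun j _ => ?_
  have hj : x * b ^ ((j : ℕ) + 1) ≤ b ^ (n + j) :=
    calc x * b ^ ((j : ℕ) + 1) = x * b * b ^ (j : ℕ) := by ring
      _ ≤ b ^ n * b ^ (j : ℕ) := by gcongr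
      _ = b ^ (n + j) := by ring
  rw [← div_eq_mul_inv, div_le_iff₀ (by positivity), inv_mul_eq_div,
    le_div_iff₀ (by positivity)]
  exact hj

theorem rpow_le_pow_of_mul_logb_le {b x c : ℝ} (hb : 1 < b) (hx : 0 < x) {N : ℕ}
    (h : c * Real.logb b x ≤ N) : x ^ c ≤ b ^ N :=
  calc x ^ c = b ^ (c * Real.logb b x) := by
        rw [mul_comm, Real.rpow_mul (by positivity), Real.rpow_logb (by positivity) hb.ne' hx]
    _ ≤ b ^ (N : ℝ) := Real.rpow_le_rpow_of_exponent_le hb.le h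
    _ = b ^ N := Real.rpow_natCast b N

theorem add_floor_add_one_le_of_estimate_gt {b x a : ℝ} (hb : 1 < b) (hx : 0 ≤ x) (ha : 0 ≤ a)
    {n N : ℕ} (hn : b ^ n ≤ x * b ^ 2)
    (h : Real.exp 1 * x / (b - 1) * b ^ (a + 2) < (b ^ N - b) / (b - 1)) :
    n + (⌊a⌋₊ + 1) ≤ N := by
  have hb0 : 0 < b := by positivity
  have hfloor : b ^ (⌊a⌋₊ + 2) ≤ b ^ (a + 2) := by
    rw [← Real.rpow_natCast]
    exact Real.rpow_le_rpow_of_exponent_le hb.le (by push_cast; linarith [Nat.floor_le ha])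
  have hxN : x * b ^ (a + 2) < b ^ N := by
    rw [div_mul_eq_mul_div, div_lt_div_iff_of_pos_right (sub_pos.2 hb)] at h
    have : x * b ^ (a + 2) ≤ Real.exp 1 * x * b ^ (a + 2) := by
      gcongr
      exact le_mul_of_one_le_left hx (Real.one_le_exp zero_le_one)
    linarith
  suffices b ^ (n + ⌊a⌋₊) < b ^ N by
    have := (pow_lt_pow_iff_right₀ hb).1 this
    omega
  calc b ^ (n + ⌊a⌋₊) ≤ x * b ^ 2 * b ^ ⌊a⌋₊ := by rw [pow_add]; gcongr
    _ = x * b ^ (⌊a⌋₊ + 2) := by ring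
    _ ≤ x * b ^ (a + 2) := by gcongr
    _ < b ^ N := hxN

theorem morris_counter_upper_deviation_general
    {Ω : Type*} [MeasurableSpace Ω] (P : Measure Ω)
    (b : ℝ) (hb : 1 < b) (T t : ℕ) (hT : 2 ≤ T) (ht1 : 1 ≤ t)
    (c : ℝ) (hc : 0 < c)
    (V : ℕ → Ω → ℝ) (hVmeas : ∀ s, Measurable (V s))
    (hVindep : iIndepFun V P)
    (hVunif : ∀ s, P.map (V s) = volume.restrict (Set.Icc (0 : ℝ) 1))
    (C : ℕ → Ω → ℕ)
    (hC1 : ∀ ω, C 1 ω = 1)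
    (hCstep : ∀ s, 1 ≤ s → ∀ ω,
      C (s + 1) ω = if V s ω < (b ^ C s ω)⁻¹ then C s ω + 1 else C s ω) :
    P {ω | (Real.exp 1 * t / (b - 1))
            * b ^ (Real.sqrt (2 * c * (Real.log T / Real.log b)) + 2)
          < (b ^ C (t + 1) ω - b) / (b - 1)}
      ≤ ENNReal.ofReal (1 / (T : ℝ) ^ c) := by
  have hb0 : 0 < b := by positivity
  obtain ⟨k, hbk, htk⟩ := exists_nat_pow_near (by exact_mod_cast ht1 : (1 : ℝ) ≤ t) hb
  have hk_le : b ^ (k + 2) ≤ t * b ^ 2 := by rw [pow_add]; gcongr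
  have hk_ge : t * b ≤ b ^ (k + 2) := by rw [pow_succ b (k + 1)]; gcongr
  set m := ⌊√(2 * c * (Real.log T / Real.log b))⌋₊ + 1
  have hlevel : {ω | Real.exp 1 * t / (b - 1) * b ^ (√(2 * c * (Real.log T / Real.log b)) + 2)
      < (b ^ C (t + 1) ω - b) / (b - 1)} ⊆ {ω | k + 2 + m ≤ C (t + 1) ω} := fun ω hω =>
    add_floor_add_one_le_of_estimate_gt hb t.cast_nonneg (Real.sqrt_nonneg _) hk_le hω
  have hbound : (t : ℝ) ^ m * ∏ j : Fin m, (b ^ (k + 2 + j))⁻¹ ≤ 1 / (T : ℝ) ^ c := by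
    have hlogT : 0 ≤ Real.logb b T := Real.logb_nonneg hb (by exact_mod_cast (by omega : 1 ≤ T))
    rw [one_div]
    exact (pow_mul_prod_inv_pow_le hb0 t.cast_nonneg hk_ge m).trans <|
      inv_anti₀ (by positivity) <| rpow_le_pow_of_mul_logb_le hb (by positivity) <|
        mul_le_sum_fin_floor_sqrt_add_one (mul_nonneg hc.le hlogT)
  calc _ ≤ P {ω | k + 2 + m ≤ C (t + 1) ω} := measure_mono hlevel
    _ ≤ t ^ m * ∏ j : Fin m, ENNReal.ofReal ((b ^ (k + 2 + j))⁻¹) :=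
        measure_counter_ge_add_le (p := fun ℓ => (b ^ ℓ)⁻¹) hVmeas hVindep hVunif
          (fun ω s hs => hCstep s hs ω) (fun ω => by rw [hC1]; omega) t m
    _ = ENNReal.ofReal ((t : ℝ) ^ m * ∏ j : Fin m, (b ^ (k + 2 + j))⁻¹) := by
        rw [ENNReal.ofReal_mul (by positivity), ENNReal.ofReal_pow t.cast_nonneg,
          ENNReal.ofReal_natCast, ENNReal.ofReal_prod_of_nonneg fun j _ => by positivity]
    _ ≤ ENNReal.ofReal (1 / (T : ℝ) ^ c) := ENNReal.ofReal_le_ofReal hbound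

/-- Upper-deviation bound for the Morris counter: after `t ≤ T` increments with base
`b > 1`, the estimate `τ̃(C_{t+1}) = (b^{C_{t+1}} - b)/(b - 1)` satisfies
`P(τ̃(C_{t+1}) > (e t/(b-1)) · b^{√(2 c log_b T) + 2}) ≤ 1/T^c` for every `c > 0`. -/
theorem morris_counter_upper_deviation
    {Ω : Type*} [MeasurableSpace Ω] (P : Measure Ω) [IsProbabilityMeasure P]
    (b : ℝ) (hb : 1 < b) (T t : ℕ) (hT : 2 ≤ T) (ht1 : 1 ≤ t) (htT : t ≤ T)
    (c : ℝ) (hc : 0 < c)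
    (V : ℕ → Ω → ℝ) (hVmeas : ∀ s, Measurable (V s))
    (hVindep : iIndepFun V P)
    (hVunif : ∀ s, P.map (V s) = volume.restrict (Set.Icc (0 : ℝ) 1))
    (C : ℕ → Ω → ℕ) (hCmeas : ∀ s, Measurable (C s))
    (hC1 : ∀ ω, C 1 ω = 1)
    (hCstep : ∀ s, 1 ≤ s → ∀ ω,
      C (s + 1) ω = if V s ω < (b ^ C s ω)⁻¹ then C s ω + 1 else C s ω) :
    P {ω | (Real.exp 1 * t / (b - 1))
            * b ^ (Real.sqrt (2 * c * (Real.log T / Real.log b)) + 2)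
          < (b ^ C (t + 1) ω - b) / (b - 1)}
      ≤ ENNReal.ofReal (1 / (T : ℝ) ^ c) :=
  morris_counter_upper_deviation_general P b hb T t hT ht1 c hc V hVmeas hVindep hVunif C hC1 hCstep
end

section
/- Fix a base b > 1 and let C_{t+1} be the value of the Morris counter after t ≥ 0 increment operations. Then the count estimate is unbiased: E[ τ̃(C_{t+1}) ] = E[ (b^{C_{t+1}} − b)/(b − 1) ] = t. Equivalently, at each step E[ b^{C_{t+1}} | C_1, …, C_t ] = b^{C_t} + (b − 1) almost surely. -/
/-!
Conditionally on the past, the next uniform variable `V s` is independent of the current value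
`C s = c`, so `c` may be frozen and only `V s` averaged: `b ^ (c + 1)` with probability `b⁻ᶜ` and
`b ^ c` otherwise, i.e. `b ^ c + (b - 1)` on average. Freezing is legitimate because, restricted
to an event of the past, the joint law of `(C s, V s)` is a product measure. Integrating, each
step adds `b - 1` to `E[b ^ C]`, and `E[b ^ C 1] = b`.
-/

open MeasureTheory ProbabilityTheory
open scoped ENNReal

noncomputable def morrisStep (b : ℝ) (c : ℕ) (u : ℝ) : ℕ := if u < (b ^ c)⁻¹ then c + 1 else c

lemma morrisStep_le_succ (b : ℝ) (c : ℕ) (u : ℝ) : morrisStep b c u ≤ c + 1 := by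
  unfold morrisStep; split <;> omega

lemma measurable_morrisStep (b : ℝ) : Measurable (Function.uncurry (morrisStep b)) :=
  measurable_from_prod_countable_right fun c =>
    show Measurable (morrisStep b c) from
      Measurable.ite measurableSet_Iio measurable_const measurable_const

lemma pow_morrisStep (b : ℝ) (c : ℕ) (u : ℝ) :
    b ^ morrisStep b c u = b ^ c + (Set.Iio (b ^ c)⁻¹).indicator (fun _ => b ^ c * (b - 1)) u := by
  unfold morrisStep
  split_ifs with h
  · rw [Set.indicator_of_mem (Set.mem_Iio.2 h), pow_succ]; ring
  · rw [Set.indicator_of_notMem (mt Set.mem_Iio.1 h), add_zero]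

lemma integrable_pow_morrisStep (b : ℝ) (c : ℕ) (μ : Measure ℝ) [IsFiniteMeasure μ] :
    Integrable (fun u => b ^ morrisStep b c u) μ := by
  simp_rw [pow_morrisStep]
  exact (integrable_const _).add ((integrable_const _).indicator measurableSet_Iio)

lemma integral_pow_morrisStep_uniform {b : ℝ} (hb : 1 ≤ b) (c : ℕ) :
    ∫ u in Set.Icc (0 : ℝ) 1, b ^ morrisStep b c u = b ^ c + (b - 1) := by
  have hpos : 0 < b ^ c := pow_pos (by linarith) c
  have hp1 : (b ^ c)⁻¹ ≤ 1 := inv_le_one_of_one_le₀ (one_le_pow₀ hb)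
  have hvol : volume.real (Set.Iio (b ^ c)⁻¹ ∩ Set.Icc (0 : ℝ) 1) = (b ^ c)⁻¹ := by
    rw [show Set.Iio (b ^ c)⁻¹ ∩ Set.Icc (0 : ℝ) 1 = Set.Ico 0 (b ^ c)⁻¹ by
      ext x; simp only [Set.mem_inter_iff, Set.mem_Iio, Set.mem_Icc, Set.mem_Ico]
      exact ⟨fun ⟨h, h0, _⟩ => ⟨h0, h⟩, fun ⟨h0, h⟩ => ⟨h, h0, by linarith⟩⟩]
    simp [Real.volume_real_Ico, hpos.le]
  simp_rw [pow_morrisStep]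
  rw [integral_add (integrable_const _) ((integrable_const _).indicator measurableSet_Iio),
    integral_indicator measurableSet_Iio, setIntegral_const, setIntegral_const,
    measureReal_restrict_apply measurableSet_Iio, hvol, Real.volume_real_Icc]
  simp only [sub_zero, zero_le_one, sup_of_le_left, smul_eq_mul, one_mul, add_right_inj]
  field_simp

theorem setLIntegral_comp_prodMk_of_indep {Ω β γ : Type*} {m m0 : MeasurableSpace Ω}
    [MeasurableSpace β] [MeasurableSpace γ] {P : Measure Ω} [IsFiniteMeasure P]
    {X : Ω → β} {U : Ω → γ} (hm : m ≤ m0) (hX : Measurable[m] X) (hU : Measurable U)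
    (hindep : Indep (MeasurableSpace.comap U inferInstance) m P)
    {f : β × γ → ℝ≥0∞} (hf : Measurable f) {A : Set Ω} (hA : MeasurableSet[m] A) :
    ∫⁻ ω in A, f (X ω, U ω) ∂P = ∫⁻ ω in A, ∫⁻ u, f (X ω, u) ∂(P.map U) ∂P := by
  have hX0 : Measurable X := hX.mono hm le_rfl
  have hlaw : (P.restrict A).map (fun ω => (X ω, U ω)) = ((P.restrict A).map X).prod (P.map U) := by
    refine (Measure.prod_eq fun s t hs ht => ?_).symm
    rw [Measure.map_apply (hX0.prodMk hU) (hs.prod ht), Measure.map_apply hX0 hs,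
      Measure.map_apply hU ht, Measure.restrict_apply ((hX0.prodMk hU) (hs.prod ht)),
      Measure.restrict_apply (hX0 hs), Set.mk_preimage_prod, mul_comm,
      ← (Indep_iff _ _ _).1 hindep _ _ ⟨t, ht, rfl⟩ ((hX hs).inter hA)]
    congr 1
    ext ω; simp only [Set.mem_inter_iff, Set.mem_preimage]; tauto
  calc ∫⁻ ω in A, f (X ω, U ω) ∂P
      = ∫⁻ p, f p ∂((P.restrict A).map fun ω => (X ω, U ω)) :=
        (lintegral_map hf (hX0.prodMk hU)).symm
    _ = ∫⁻ x, ∫⁻ u, f (x, u) ∂(P.map U) ∂((P.restrict A).map X) := by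
        rw [hlaw, lintegral_prod _ hf.aemeasurable]
    _ = ∫⁻ ω in A, ∫⁻ u, f (X ω, u) ∂(P.map U) ∂P := lintegral_map hf.lintegral_prod_right' hX0

theorem condExp_pow_morrisStep {Ω : Type*} {m m0 : MeasurableSpace Ω} {P : Measure Ω}
    [IsProbabilityMeasure P] {b : ℝ} (hb : 1 < b) (hm : m ≤ m0) {X : Ω → ℕ}
    (hX : Measurable[m] X) (hXint : Integrable (fun ω => b ^ X ω) P) {U : Ω → ℝ}
    (hU : Measurable U) (hindep : Indep (MeasurableSpace.comap U inferInstance) m P)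
    (hunif : P.map U = volume.restrict (Set.Icc 0 1)) :
    P[fun ω => b ^ morrisStep b (X ω) (U ω) | m] =ᵐ[P] fun ω => b ^ X ω + (b - 1) := by
  have hb0 : 0 < b := by linarith
  have hX0 : Measurable X := hX.mono hm le_rfl
  have hpow : Measurable fun n : ℕ => b ^ n := .of_discrete
  have hstep : Measurable fun ω => b ^ morrisStep b (X ω) (U ω) :=
    hpow.comp ((measurable_morrisStep b).comp (hX0.prodMk hU))
  have hstep_int : Integrable (fun ω => b ^ morrisStep b (X ω) (U ω)) P := by
    refine (hXint.const_mul b).mono' hstep.aestronglyMeasurable (ae_of_all _ fun ω => ?_)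
    rw [Real.norm_of_nonneg (by positivity), ← pow_succ']
    exact pow_le_pow_right₀ hb.le (morrisStep_le_succ b _ _)
  have hlin : ∀ A, MeasurableSet[m] A →
      ∫⁻ ω in A, ENNReal.ofReal (b ^ morrisStep b (X ω) (U ω)) ∂P =
        ∫⁻ ω in A, ENNReal.ofReal (b ^ X ω + (b - 1)) ∂P := by
    intro A hA
    refine (setLIntegral_comp_prodMk_of_indep
      (f := fun p => ENNReal.ofReal (b ^ Function.uncurry (morrisStep b) p)) hm hX hU hindep
      (ENNReal.measurable_ofReal.comp (hpow.comp (measurable_morrisStep b))) hA).trans ?_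
    refine setLIntegral_congr_fun (hm A hA) fun ω _ => ?_
    simp only [hunif, Function.uncurry_apply_pair]
    rw [← ofReal_integral_eq_lintegral_ofReal (integrable_pow_morrisStep b (X ω) _)
      (ae_of_all _ fun u => by positivity)]
    exact congrArg ENNReal.ofReal (integral_pow_morrisStep_uniform hb.le (X ω))
  refine (ae_eq_condExp_of_forall_setIntegral_eq hm hstep_int
    (fun A _ _ => (hXint.add (integrable_const _)).integrableOn) (fun A hA _ => ?_)
    ((hpow.comp hX).add measurable_const).stronglyMeasurable.aestronglyMeasurable).symm
  simp only [Pi.add_apply]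
  have hnonneg : ∀ᵐ ω ∂P.restrict A, 0 ≤ b ^ X ω + (b - 1) :=
    ae_of_all _ fun ω => by have := pow_pos hb0 (X ω); linarith
  rw [integral_eq_lintegral_of_nonneg_ae hnonneg
      ((hpow.comp hX0).add measurable_const).aestronglyMeasurable,
    integral_eq_lintegral_of_nonneg_ae (ae_of_all _ fun ω => by positivity)
      hstep.aestronglyMeasurable, hlin A hA]

lemma integrable_pow_of_le {Ω : Type*} [MeasurableSpace Ω] {P : Measure Ω} [IsFiniteMeasure P]
    {b : ℝ} (hb : 1 ≤ b) {X : Ω → ℕ} (hX : Measurable X) {n : ℕ} (hXn : ∀ ω, X ω ≤ n) :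
    Integrable (fun ω => b ^ X ω) P :=
  (integrable_const (b ^ n)).mono' ((Measurable.of_discrete.comp hX).aestronglyMeasurable)
    (ae_of_all _ fun ω => by
      rw [Real.norm_of_nonneg (by positivity)]
      exact pow_le_pow_right₀ hb (hXn ω))

section MorrisProcess

variable {Ω : Type*} {b : ℝ} {V : ℕ → Ω → ℝ} {C : ℕ → Ω → ℕ}

structure IsMorrisCounter (b : ℝ) (V : ℕ → Ω → ℝ) (C : ℕ → Ω → ℕ) : Prop where
  one : ∀ ω, C 1 ω = 1
  succ : ∀ s, 1 ≤ s → ∀ ω, C (s + 1) ω = morrisStep b (C s ω) (V s ω)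

namespace IsMorrisCounter

lemma le_index (hC : IsMorrisCounter b V C) (s : ℕ) (ω : Ω) : C (s + 1) ω ≤ s + 1 := by
  induction s with
  | zero => simp [hC.one]
  | succ s ih =>
    rw [hC.succ (s + 1) s.succ_pos]
    exact (morrisStep_le_succ b _ _).trans (by omega)

variable [MeasurableSpace Ω]

lemma adapted_natural (hC : IsMorrisCounter b V C) (hV : ∀ s, StronglyMeasurable (V s)) :
    Adapted (Filtration.natural V hV) fun s => C (s + 1) := by
  intro s
  induction s with
  | zero =>
    show Measurable[Filtration.natural V hV 0] (C 1)
    rw [show C 1 = fun _ => 1 from funext hC.one]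
    exact measurable_const
  | succ s ih =>
    show Measurable[Filtration.natural V hV (s + 1)] (C (s + 1 + 1))
    rw [show C (s + 1 + 1) = fun ω => morrisStep b (C (s + 1) ω) (V (s + 1) ω) from
      funext (hC.succ (s + 1) s.succ_pos)]
    exact (measurable_morrisStep b).comp
      ((ih.mono (Filtration.mono _ s.le_succ) le_rfl).prodMk
        (Filtration.stronglyAdapted_natural hV (s + 1)).measurable)

lemma comap_history_le_natural (hC : IsMorrisCounter b V C)
    (hV : ∀ s, StronglyMeasurable (V s)) (s : ℕ) :
    MeasurableSpace.comap (fun ω (j : Fin (s + 1)) => C (j.val + 1) ω) inferInstance ≤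
      Filtration.natural V hV s :=
  (MeasurableSpace.comap_process_pi fun (j : Fin (s + 1)) ω => C (j.val + 1) ω).trans_le <|
    iSup_le fun j => measurable_iff_comap_le.1 <| (hC.adapted_natural hV j.val).mono
      (Filtration.mono _ (Nat.lt_succ_iff.1 j.isLt)) le_rfl

variable {P : Measure Ω} [IsProbabilityMeasure P]

lemma integrable_pow (hC : IsMorrisCounter b V C) (hb : 1 ≤ b) (hVmeas : ∀ s, Measurable (V s))
    (s : ℕ) : Integrable (fun ω => b ^ C (s + 1) ω) P :=
  integrable_pow_of_le hb
    ((hC.adapted_natural (fun s => (hVmeas s).stronglyMeasurable) s).mono (Filtration.le _ s)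
      le_rfl)
    (hC.le_index s)

lemma condExp_pow_succ (hC : IsMorrisCounter b V C) (hb : 1 < b)
    (hVmeas : ∀ s, Measurable (V s)) (hVindep : iIndepFun V P)
    (hVunif : ∀ s, P.map (V s) = volume.restrict (Set.Icc (0 : ℝ) 1)) (s : ℕ) :
    P[(fun ω => b ^ C (s + 1 + 1) ω) |
      MeasurableSpace.comap (fun ω (j : Fin (s + 1)) => C (j.val + 1) ω) inferInstance]
        =ᵐ[P] fun ω => b ^ C (s + 1) ω + (b - 1) := by
  have hV : ∀ s, StronglyMeasurable (V s) := fun s => (hVmeas s).stronglyMeasurable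
  have hhist := hC.comap_history_le_natural hV s
  have hnext : (fun ω => b ^ C (s + 1 + 1) ω) =
      fun ω => b ^ morrisStep b (C (s + 1) ω) (V (s + 1) ω) :=
    funext fun ω => congrArg (b ^ ·) (hC.succ (s + 1) s.succ_pos ω)
  rw [hnext]
  exact condExp_pow_morrisStep hb (hhist.trans (Filtration.le _ s))
    (measurable_iff_comap_le.2 (MeasurableSpace.comap_le_comap_pi
      (g := fun (j : Fin (s + 1)) ω => C (j.val + 1) ω) (Fin.last s)))
    (hC.integrable_pow hb.le hVmeas s) (hVmeas (s + 1))
    (indep_of_indep_of_le_right (hVindep.indep_comap_natural_of_lt hV s.lt_succ_self) hhist)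
    (hVunif (s + 1))

lemma integral_pow (hC : IsMorrisCounter b V C) (hb : 1 < b)
    (hVmeas : ∀ s, Measurable (V s)) (hVindep : iIndepFun V P)
    (hVunif : ∀ s, P.map (V s) = volume.restrict (Set.Icc (0 : ℝ) 1)) (t : ℕ) :
    ∫ ω, b ^ C (t + 1) ω ∂P = b + (b - 1) * t := by
  induction t with
  | zero => simp [hC.one]
  | succ t ih =>
    have hhist := hC.comap_history_le_natural (fun s => (hVmeas s).stronglyMeasurable) t
    rw [← integral_condExp (hhist.trans (Filtration.le _ t)),
      integral_congr_ae (hC.condExp_pow_succ hb hVmeas hVindep hVunif t),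
      integral_add (hC.integrable_pow hb.le hVmeas t) (integrable_const _), ih]
    simp only [integral_const, probReal_univ, smul_eq_mul, one_mul, Nat.cast_add, Nat.cast_one]
    ring

end IsMorrisCounter

end MorrisProcess

theorem morris_counter_unbiased_general
    {Ω : Type*} [MeasurableSpace Ω] (P : Measure Ω) [IsProbabilityMeasure P]
    (b : ℝ) (hb : 1 < b) (t : ℕ)
    (V : ℕ → Ω → ℝ) (hVmeas : ∀ s, Measurable (V s))
    (hVindep : iIndepFun V P)
    (hVunif : ∀ s, P.map (V s) = volume.restrict (Set.Icc (0 : ℝ) 1))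
    (C : ℕ → Ω → ℕ)
    (hC1 : ∀ ω, C 1 ω = 1)
    (hCstep : ∀ s, 1 ≤ s → ∀ ω,
      C (s + 1) ω = if V s ω < (b ^ C s ω)⁻¹ then C s ω + 1 else C s ω) :
    (∫ ω, (b ^ C (t + 1) ω - b) / (b - 1) ∂P) = t ∧
      ∀ s, 1 ≤ s →
        P[(fun ω => b ^ C (s + 1) ω) |
            MeasurableSpace.comap (fun ω => fun j : Fin s => C (j.val + 1) ω) inferInstance]
          =ᵐ[P] fun ω => b ^ C s ω + (b - 1) := by
  have hC : IsMorrisCounter b V C := ⟨hC1, hCstep⟩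
  refine ⟨?_, fun s hs => ?_⟩
  · rw [integral_div, integral_sub (hC.integrable_pow hb.le hVmeas t) (integrable_const b),
      hC.integral_pow hb hVmeas hVindep hVunif t]
    simp only [integral_const, probReal_univ, one_smul, add_sub_cancel_left]
    exact mul_div_cancel_left₀ _ (sub_ne_zero.2 hb.ne')
  · obtain ⟨s, rfl⟩ := Nat.exists_eq_add_of_le' hs
    exact hC.condExp_pow_succ hb hVmeas hVindep hVunif s

/-- Unbiasedness of the Morris counter: after `t ≥ 0` increments with base `b > 1`, the
estimate `τ̃(C_{t+1}) = (b^{C_{t+1}} - b)/(b - 1)` satisfies `E[τ̃(C_{t+1})] = t`;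
equivalently, at each step `E[b^{C_{s+1}} | C_1, …, C_s] = b^{C_s} + (b - 1)` a.s. -/
theorem morris_counter_unbiased
    {Ω : Type*} [MeasurableSpace Ω] (P : Measure Ω) [IsProbabilityMeasure P]
    (b : ℝ) (hb : 1 < b) (t : ℕ)
    (V : ℕ → Ω → ℝ) (hVmeas : ∀ s, Measurable (V s))
    (hVindep : iIndepFun V P)
    (hVunif : ∀ s, P.map (V s) = volume.restrict (Set.Icc (0 : ℝ) 1))
    (C : ℕ → Ω → ℕ) (hCmeas : ∀ s, Measurable (C s))
    (hC1 : ∀ ω, C 1 ω = 1)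
    (hCstep : ∀ s, 1 ≤ s → ∀ ω,
      C (s + 1) ω = if V s ω < (b ^ C s ω)⁻¹ then C s ω + 1 else C s ω) :
    (∫ ω, (b ^ C (t + 1) ω - b) / (b - 1) ∂P) = t ∧
      ∀ s, 1 ≤ s →
        P[(fun ω => b ^ C (s + 1) ω) |
            MeasurableSpace.comap (fun ω => fun j : Fin s => C (j.val + 1) ω) inferInstance]
          =ᵐ[P] fun ω => b ^ C s ω + (b - 1) :=
  morris_counter_unbiased_general P b hb t V hVmeas hVindep hVunif C hC1 hCstep
end

section
/- Fix a base b > 1 and an integer t ≥ 1. Let C_{t+1} be the value of the Morris counter after t increment operations, let j₀ be the minimum positive integer such that b^{−j₀} ≤ 1/(e·t), and let k ≥ 1 be an integer. Then P( C_{t+1} ≥ j₀ + k ) ≤ k^{−k} · b^{−k(k−1)/2}. -/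
/-!
If the counter climbs from level `j₀` to level `j₀ + k` within `t` steps, then for every `i < k`
there is a step `s ≤ t` at which it sat at level `j₀ + i` and `V s < b^{-(j₀+i)}`; these steps
increase with `i`. Since the `V s` are independent and uniform, every fixed set of `k` steps has
probability `∏_{i<k} b^{-(j₀+i)} = b^{-k j₀} b^{-k(k-1)/2}` of doing this, so a union bound over
the `choose t k ≤ t^k / k!` sets gives `P ≤ (t b^{-j₀})^k / k! · b^{-k(k-1)/2}`. Finally
`t b^{-j₀} ≤ 1/e` and `k^k ≤ e^k k!`.
-/

open MeasureTheory ProbabilityTheory Finset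

namespace Finset

variable {α : Type*} [LinearOrder α]

theorem prod_card_filter_lt {M : Type*} [CommMonoid M] (s : Finset α) (f : ℕ → M) :
    ∏ a ∈ s, f #{x ∈ s | x < a} = ∏ i ∈ range #s, f i := by
  induction s using Finset.induction_on_max with
  | empty => simp
  | insert a s ha ih =>
    have ha' : a ∉ s := fun h => lt_irrefl a (ha a h)
    have h_top : #{x ∈ insert a s | x < a} = #s := by
      rw [filter_insert, if_neg (lt_irrefl a), filter_true_of_mem ha]
    have h_below : ∀ y ∈ s, #{x ∈ insert a s | x < y} = #{x ∈ s | x < y} := fun y hy => by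
      rw [filter_insert, if_neg (not_lt.2 (ha y hy).le)]
    rw [prod_insert ha', h_top, prod_congr rfl fun y hy => by rw [h_below y hy], ih,
      card_insert_of_notMem ha', prod_range_succ, mul_comm]

theorem card_filter_lt_image_of_strictMono {k : ℕ} {σ : Fin k → α} (hσ : StrictMono σ)
    (i : Fin k) : #{x ∈ univ.image σ | x < σ i} = i := by
  rw [filter_image, card_image_of_injective _ hσ.injective]
  simp only [hσ.lt_iff_lt]
  rw [filter_gt_eq_Iio, Fin.card_Iio]

end Finset

namespace MorrisCounter

def IsPath (C : ℕ → ℕ) (V p : ℕ → ℝ) : Prop :=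
  ∀ s, 1 ≤ s → C (s + 1) = if V s < p (C s) then C s + 1 else C s

variable {C : ℕ → ℕ} {V p : ℕ → ℝ}

theorem IsPath.monotoneOn (hC : IsPath C V p) : MonotoneOn C (Set.Ici 1) := by
  refine monotoneOn_of_le_add_one Set.ordConnected_Ici fun s _ hs _ => ?_
  rw [hC s hs]
  split <;> omega

theorem IsPath.exists_step_of_le_of_lt (hC : IsPath C V p) {j w : ℕ} (hj : C 1 ≤ j)
    (hjw : j < C (w + 1)) :
    ∃ s ∈ Icc 1 w, C s = j ∧ V s < p j := by
  induction w with
  | zero => exact absurd hjw (not_lt.2 hj)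
  | succ w ih =>
    by_cases hw : j < C (w + 1)
    · obtain ⟨s, hs, hsj, hVs⟩ := ih hw
      exact ⟨s, Icc_subset_Icc_right w.le_succ hs, hsj, hVs⟩
    · have hjump : V (w + 1) < p (C (w + 1)) := by
        by_contra h
        rw [hC (w + 1) (by omega), if_neg h] at hjw
        omega
      have hCj : C (w + 1) = j := by
        rw [hC (w + 1) (by omega), if_pos hjump] at hjw
        omega
      exact ⟨w + 1, mem_Icc.2 ⟨by omega, le_rfl⟩, hCj, hCj ▸ hjump⟩

theorem IsPath.exists_mem_powersetCard_forall_lt (hC : IsPath C V p) {j₀ k t : ℕ}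
    (hj₀ : C 1 ≤ j₀) (h : j₀ + k ≤ C (t + 1)) :
    ∃ A ∈ powersetCard k (Icc 1 t), ∀ n ∈ A, V n < p (j₀ + #{m ∈ A | m < n}) := by
  have hlevel (i : Fin k) : ∃ s ∈ Icc 1 t, C s = j₀ + i ∧ V s < p (j₀ + i) :=
    hC.exists_step_of_le_of_lt (by omega) (by omega)
  choose σ hσt hσC hσV using hlevel
  have hσ : StrictMono σ := fun i i' hii' =>
    hC.monotoneOn.reflect_lt (mem_Icc.1 (hσt i)).1 (mem_Icc.1 (hσt i')).1
      (by rw [hσC, hσC]; simpa using hii')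
  refine ⟨univ.image σ, mem_powersetCard.2 ⟨?_, ?_⟩, ?_⟩
  · simpa [subset_iff] using hσt
  · rw [card_image_of_injective _ hσ.injective, card_univ, Fintype.card_fin]
  · simp only [mem_image, mem_univ, true_and, forall_exists_index, forall_apply_eq_imp_iff]
    intro i
    rw [card_filter_lt_image_of_strictMono hσ]
    exact hσV i

end MorrisCounter

section Uniform

variable {Ω : Type*} [MeasurableSpace Ω] {P : Measure Ω}

theorem measure_preimage_Iio_of_map_eq_uniform {X : Ω → ℝ} (hX : Measurable X)
    (hunif : P.map X = volume.restrict (Set.Icc 0 1)) {x : ℝ} (hx : x ≤ 1) :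
    P (X ⁻¹' Set.Iio x) = ENNReal.ofReal x := by
  have hIio : Set.Iio x ∩ Set.Icc 0 1 = Set.Ico 0 x := by
    ext y
    simp only [Set.mem_inter_iff, Set.mem_Iio, Set.mem_Icc, Set.mem_Ico]
    exact ⟨fun h => ⟨h.2.1, h.1⟩, fun h => ⟨h.2, h.1, h.2.le.trans hx⟩⟩
  rw [← Measure.map_apply hX measurableSet_Iio, hunif,
    Measure.restrict_apply measurableSet_Iio, hIio, Real.volume_Ico, sub_zero]

theorem measure_biInter_preimage_Iio_of_iIndepFun {V : ℕ → Ω → ℝ} (hV : ∀ n, Measurable (V n))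
    (hindep : iIndepFun V P) (hunif : ∀ n, P.map (V n) = volume.restrict (Set.Icc 0 1))
    (A : Finset ℕ) {q : ℕ → ℝ} (hq0 : ∀ n, 0 ≤ q n) (hq1 : ∀ n, q n ≤ 1) :
    P (⋂ n ∈ A, V n ⁻¹' Set.Iio (q n)) = ENNReal.ofReal (∏ n ∈ A, q n) := by
  rw [hindep.meas_biInter fun n _ => ⟨Set.Iio (q n), measurableSet_Iio, rfl⟩,
    ENNReal.ofReal_prod_of_nonneg fun n _ => hq0 n]
  exact prod_congr rfl fun n _ => measure_preimage_Iio_of_map_eq_uniform (hV n) (hunif n) (hq1 n)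

end Uniform

theorem Nat.cast_sum_range_id (k : ℕ) : ((∑ i ∈ range k, i : ℕ) : ℝ) = k * (k - 1) / 2 := by
  induction k with
  | zero => simp
  | succ k ih =>
    rw [sum_range_succ, Nat.cast_add, ih]
    push_cast
    ring

theorem prod_range_inv_pow_add {b : ℝ} (hb : 0 ≤ b) (j k : ℕ) :
    ∏ i ∈ range k, (b ^ (j + i))⁻¹ = ((b ^ j)⁻¹) ^ k * b ^ (-((k : ℝ) * ((k : ℝ) - 1) / 2)) := by
  rw [← Nat.cast_sum_range_id, Real.rpow_neg hb, Real.rpow_natCast, prod_inv_distrib,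
    prod_pow_eq_pow_sum, sum_add_distrib, sum_const, card_range, smul_eq_mul, pow_add, pow_mul',
    mul_inv, inv_pow]

theorem choose_mul_pow_le_inv_pow {t k : ℕ} {x : ℝ} (hx0 : 0 ≤ x)
    (hx : x ≤ 1 / (Real.exp 1 * t)) : t.choose k * x ^ k ≤ ((k : ℝ) ^ k)⁻¹ := by
  have htx : t * x ≤ (Real.exp 1)⁻¹ := by
    rcases t.eq_zero_or_pos with rfl | ht
    · simp [(Real.exp_pos 1).le]
    · calc t * x ≤ t * (1 / (Real.exp 1 * t)) := by gcongr
        _ = (Real.exp 1)⁻¹ := by field_simp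
  have hk : (k : ℝ) ^ k / k.factorial ≤ Real.exp 1 ^ k := by
    rw [← Real.exp_nat_mul, mul_one]
    exact Real.pow_div_factorial_le_exp _ (Nat.cast_nonneg k) k
  calc t.choose k * x ^ k ≤ (t : ℝ) ^ k / k.factorial * x ^ k := by
        gcongr
        exact Nat.choose_le_pow_div k t
    _ = (t * x) ^ k / k.factorial := by ring
    _ ≤ (Real.exp 1)⁻¹ ^ k / k.factorial := by gcongr
    _ ≤ ((k : ℝ) ^ k)⁻¹ := by
        rw [inv_pow, div_eq_mul_inv, ← mul_inv]
        exact inv_anti₀ (mod_cast Nat.pow_self_pos) (by rwa [div_le_iff₀ (by positivity)] at hk)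

theorem choose_mul_prod_range_inv_pow_add_le {b : ℝ} (hb : 0 ≤ b) {t j k : ℕ}
    (hj : b ^ (-(j : ℝ)) ≤ 1 / (Real.exp 1 * t)) :
    t.choose k * ∏ i ∈ range k, (b ^ (j + i))⁻¹
      ≤ (k : ℝ) ^ (-(k : ℝ)) * b ^ (-((k : ℝ) * ((k : ℝ) - 1) / 2)) := by
  rw [Real.rpow_neg hb, Real.rpow_natCast] at hj
  rw [prod_range_inv_pow_add hb, ← mul_assoc, Real.rpow_neg k.cast_nonneg, Real.rpow_natCast]
  gcongr
  exact choose_mul_pow_le_inv_pow (by positivity) hj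

theorem morris_counter_tail_bound_general
    {Ω : Type*} [MeasurableSpace Ω] (P : Measure Ω)
    (b : ℝ) (hb : 1 < b) (t : ℕ)
    (V : ℕ → Ω → ℝ) (hVmeas : ∀ s, Measurable (V s))
    (hVindep : iIndepFun V P)
    (hVunif : ∀ s, P.map (V s) = volume.restrict (Set.Icc (0 : ℝ) 1))
    (C : ℕ → Ω → ℕ)
    (hC1 : ∀ ω, C 1 ω = 1)
    (hCstep : ∀ s, 1 ≤ s → ∀ ω,
      C (s + 1) ω = if V s ω < (b ^ C s ω)⁻¹ then C s ω + 1 else C s ω)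
    (j₀ : ℕ)
    (hj₀ : IsLeast {j : ℕ | 1 ≤ j ∧ b ^ (-(j : ℝ)) ≤ 1 / (Real.exp 1 * t)} j₀)
    (k : ℕ) :
    P {ω | j₀ + k ≤ C (t + 1) ω}
      ≤ ENNReal.ofReal ((k : ℝ) ^ (-(k : ℝ)) * b ^ (-((k : ℝ) * ((k : ℝ) - 1) / 2))) := by
  obtain ⟨⟨hj₀1, hj₀le⟩, -⟩ := hj₀
  have hb0 : 0 ≤ b := zero_le_one.trans hb.le
  let S := powersetCard k (Icc 1 t)
  -- the `i`-th smallest step of `A` has to beat the threshold of level `j₀ + i`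
  let q (A : Finset ℕ) (n : ℕ) : ℝ := (b ^ (j₀ + #{m ∈ A | m < n}))⁻¹
  have hsub : {ω | j₀ + k ≤ C (t + 1) ω} ⊆ ⋃ A ∈ S, ⋂ n ∈ A, V n ⁻¹' Set.Iio (q A n) := by
    intro ω (hω : j₀ + k ≤ C (t + 1) ω)
    have hpath : MorrisCounter.IsPath (C · ω) (V · ω) (fun j => (b ^ j)⁻¹) :=
      fun s hs => hCstep s hs ω
    obtain ⟨A, hA, hAV⟩ := hpath.exists_mem_powersetCard_forall_lt ((hC1 ω).trans_le hj₀1) hω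
    exact Set.mem_biUnion hA (Set.mem_iInter₂.2 hAV)
  have hpiece : ∀ A ∈ S, P (⋂ n ∈ A, V n ⁻¹' Set.Iio (q A n))
      = ENNReal.ofReal (∏ i ∈ range k, (b ^ (j₀ + i))⁻¹) := fun A hA => by
    rw [measure_biInter_preimage_Iio_of_iIndepFun hVmeas hVindep hVunif A
      (fun n => by positivity) (fun n => inv_le_one_of_one_le₀ (one_le_pow₀ hb.le)),
      prod_card_filter_lt A fun i => (b ^ (j₀ + i))⁻¹, (mem_powersetCard.1 hA).2]
  calc P {ω | j₀ + k ≤ C (t + 1) ω}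
      ≤ ∑ A ∈ S, P (⋂ n ∈ A, V n ⁻¹' Set.Iio (q A n)) :=
        (measure_mono hsub).trans (measure_biUnion_finset_le _ _)
    _ = ENNReal.ofReal (t.choose k * ∏ i ∈ range k, (b ^ (j₀ + i))⁻¹) := by
        rw [sum_congr rfl hpiece, sum_const, card_powersetCard, Nat.card_Icc, nsmul_eq_mul,
          ENNReal.ofReal_mul (by positivity), ENNReal.ofReal_natCast, Nat.add_sub_cancel]
    _ ≤ _ := ENNReal.ofReal_le_ofReal (choose_mul_prod_range_inv_pow_add_le hb0 hj₀le)

/-- Tail bound for the Morris counter: after `t ≥ 1` increments with base `b > 1`, if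
`j₀` is the least positive integer with `b^{-j₀} ≤ 1/(e t)` and `k ≥ 1`, then
`P(C_{t+1} ≥ j₀ + k) ≤ k^{-k} · b^{-k(k-1)/2}`. -/
theorem morris_counter_tail_bound
    {Ω : Type*} [MeasurableSpace Ω] (P : Measure Ω) [IsProbabilityMeasure P]
    (b : ℝ) (hb : 1 < b) (t : ℕ) (ht : 1 ≤ t)
    (V : ℕ → Ω → ℝ) (hVmeas : ∀ s, Measurable (V s))
    (hVindep : iIndepFun V P)
    (hVunif : ∀ s, P.map (V s) = volume.restrict (Set.Icc (0 : ℝ) 1))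
    (C : ℕ → Ω → ℕ) (hCmeas : ∀ s, Measurable (C s))
    (hC1 : ∀ ω, C 1 ω = 1)
    (hCstep : ∀ s, 1 ≤ s → ∀ ω,
      C (s + 1) ω = if V s ω < (b ^ C s ω)⁻¹ then C s ω + 1 else C s ω)
    (j₀ : ℕ)
    (hj₀ : IsLeast {j : ℕ | 1 ≤ j ∧ b ^ (-(j : ℝ)) ≤ 1 / (Real.exp 1 * t)} j₀)
    (k : ℕ) (hk : 1 ≤ k) :
    P {ω | j₀ + k ≤ C (t + 1) ω}
      ≤ ENNReal.ofReal ((k : ℝ) ^ (-(k : ℝ)) * b ^ (-((k : ℝ) * ((k : ℝ) - 1) / 2))) :=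
  morris_counter_tail_bound_general P b hb t V hVmeas hVindep hVunif C hC1 hCstep j₀ hj₀ k
end

section
/- Fix β, β̂ ∈ ℝ^d, x ∈ {0,1}^d, and y ∈ {0,1}, and let δ = |β·x − β̂·x|. Then the logistic loss satisfies ℓ(x, y; β̂) ≤ e^{δ} · ℓ(x, y; β); equivalently, when ℓ(x, y; β) > 0, the relative error (ℓ(x, y; β̂) − ℓ(x, y; β)) / ℓ(x, y; β) is at most e^{δ} − 1. -/
/-- The logistic (sigmoid) function `σ(z) = 1/(1 + e^{-z})`. -/
noncomputable def sigmoid (z : ℝ) : ℝ := 1 / (1 + Real.exp (-z))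

/-- Logistic loss of a linear model `β` on example `(x, y)`:
`ℓ(x, y; β) = -y log σ(β·x) - (1-y) log (1 - σ(β·x))`. -/
noncomputable def logisticLoss {d : ℕ} (x : Fin d → ℝ) (y : ℝ) (β : Fin d → ℝ) : ℝ :=
  -(y * Real.log (sigmoid (∑ i, β i * x i)))
    - (1 - y) * Real.log (1 - sigmoid (∑ i, β i * x i))

private lemma one_add_exp_pos (z : ℝ) : 0 < 1 + Real.exp z := by positivity

/-- `-log σ(z) = log(1 + e^{-z})`. -/
private lemma neg_log_sigmoid (z : ℝ) :
    -Real.log (sigmoid z) = Real.log (1 + Real.exp (-z)) := by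
  unfold sigmoid
  rw [Real.log_div one_ne_zero (one_add_exp_pos (-z)).ne', Real.log_one]
  ring

/-- `-log (1 - σ(z)) = log(1 + e^{z})`. -/
private lemma neg_log_one_sub_sigmoid (z : ℝ) :
    -Real.log (1 - sigmoid z) = Real.log (1 + Real.exp z) := by
  have h : (1 : ℝ) - sigmoid z = 1 / (1 + Real.exp z) := by
    unfold sigmoid
    have h2 : Real.exp (-z) * Real.exp z = 1 := by
      rw [← Real.exp_add]; simp
    field_simp
    nlinarith [h2]
  rw [h, Real.log_div one_ne_zero (one_add_exp_pos z).ne', Real.log_one]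
  ring

/-- Key lemma: `log(1+e^{-b}) ≤ e^{|a-b|} log(1+e^{-a})`. -/
private lemma key (a b : ℝ) :
    Real.log (1 + Real.exp (-b)) ≤ Real.exp |a - b| * Real.log (1 + Real.exp (-a)) := by
  have hla : 0 ≤ Real.log (1 + Real.exp (-a)) := by
    apply Real.log_nonneg; nlinarith [Real.exp_pos (-a)]
  rcases le_or_gt a b with hab | hab
  · -- b ≥ a: LHS ≤ log(1+e^{-a}) ≤ e^δ · log(1+e^{-a})
    have h1 : Real.log (1 + Real.exp (-b)) ≤ Real.log (1 + Real.exp (-a)) := by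
      apply Real.log_le_log (one_add_exp_pos (-b))
      have := Real.exp_le_exp.2 (neg_le_neg hab)
      linarith
    calc Real.log (1 + Real.exp (-b)) ≤ Real.log (1 + Real.exp (-a)) := h1
      _ ≤ Real.exp |a - b| * Real.log (1 + Real.exp (-a)) := by
          nlinarith [Real.one_le_exp (abs_nonneg (a - b))]
  · -- b < a: δ = a - b, use Bernoulli: 1 + e^δ·e^{-a} ≤ (1+e^{-a})^{e^δ}
    have hδ : |a - b| = a - b := abs_of_pos (by linarith)
    have hp : (1 : ℝ) ≤ Real.exp (a - b) := Real.one_le_exp (by linarith)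
    have hbern : 1 + Real.exp (a - b) * Real.exp (-a)
        ≤ (1 + Real.exp (-a)) ^ Real.exp (a - b) :=
      one_add_mul_self_le_rpow_one_add (by nlinarith [Real.exp_pos (-a)] : (-1:ℝ) ≤ Real.exp (-a)) hp
    have heq : Real.exp (a - b) * Real.exp (-a) = Real.exp (-b) := by
      rw [← Real.exp_add]; ring_nf
    rw [hδ]
    calc Real.log (1 + Real.exp (-b))
        ≤ Real.log ((1 + Real.exp (-a)) ^ Real.exp (a - b)) := by
          apply Real.log_le_log (one_add_exp_pos (-b))
          rw [← heq]; exact hbern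
      _ = Real.exp (a - b) * Real.log (1 + Real.exp (-a)) := by
          rw [Real.log_rpow (one_add_exp_pos (-a))]

/-- Relative error bound: for binary features `x ∈ {0,1}^d` and label `y ∈ {0,1}`,
with `δ = |β·x - β̂·x|`, the logistic loss satisfies `ℓ(x,y;β̂) ≤ e^δ ℓ(x,y;β)`;
equivalently, when `ℓ(x,y;β) > 0`, the relative error is at most `e^δ - 1`. -/
theorem logisticLoss_relative_error {d : ℕ} (β βhat : Fin d → ℝ) (x : Fin d → ℝ) (y : ℝ)
    (hx : ∀ i, x i = 0 ∨ x i = 1) (hy : y = 0 ∨ y = 1)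
    (δ : ℝ) (hδ : δ = |(∑ i, β i * x i) - (∑ i, βhat i * x i)|) :
    logisticLoss x y βhat ≤ Real.exp δ * logisticLoss x y β ∧
      (0 < logisticLoss x y β →
        (logisticLoss x y βhat - logisticLoss x y β) / logisticLoss x y β
          ≤ Real.exp δ - 1) := by
  set a := ∑ i, β i * x i with ha
  set b := ∑ i, βhat i * x i with hb
  have hmain : logisticLoss x y βhat ≤ Real.exp δ * logisticLoss x y β := by
    rcases hy with rfl | rfl
    · -- y = 0: loss = log(1 + e^z)
      have e1 : logisticLoss x 0 β = Real.log (1 + Real.exp a) := by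
        unfold logisticLoss
        rw [← ha]
        rw [show -(0 * Real.log (sigmoid a)) - (1 - 0) * Real.log (1 - sigmoid a)
          = -Real.log (1 - sigmoid a) by ring, neg_log_one_sub_sigmoid]
      have e2 : logisticLoss x 0 βhat = Real.log (1 + Real.exp b) := by
        unfold logisticLoss
        rw [← hb]
        rw [show -(0 * Real.log (sigmoid b)) - (1 - 0) * Real.log (1 - sigmoid b)
          = -Real.log (1 - sigmoid b) by ring, neg_log_one_sub_sigmoid]
      rw [e1, e2, hδ]
      have h := key (-a) (-b)
      rw [neg_neg, neg_neg, show |(-a) - (-b)| = |a - b| by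
        rw [show (-a) - (-b) = b - a by ring, abs_sub_comm]] at h
      exact h
    · -- y = 1: loss = log(1 + e^{-z})
      have e1 : logisticLoss x 1 β = Real.log (1 + Real.exp (-a)) := by
        unfold logisticLoss
        rw [← ha]
        rw [show -(1 * Real.log (sigmoid a)) - (1 - 1) * Real.log (1 - sigmoid a)
          = -Real.log (sigmoid a) by ring, neg_log_sigmoid]
      have e2 : logisticLoss x 1 βhat = Real.log (1 + Real.exp (-b)) := by
        unfold logisticLoss
        rw [← hb]
        rw [show -(1 * Real.log (sigmoid b)) - (1 - 1) * Real.log (1 - sigmoid b)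
          = -Real.log (sigmoid b) by ring, neg_log_sigmoid]
      rw [e1, e2, hδ]
      exact key a b
  refine ⟨hmain, fun hpos => ?_⟩
  rw [div_le_iff₀ hpos, sub_mul, one_mul]
  linarith
end

section
/- Fix β ∈ ℝ^d, ε > 0, x ∈ {0,1}^d with k = ‖x‖₀ ≥ 1 nonzero entries, and y ∈ {0,1} with ℓ(x, y; β) > 0. Let β̂ be a random vector whose coordinates are independent and satisfy E[β̂_i] = β_i and |β̂_i − β_i| ≤ ε almost surely for each i (as obtained by unbiased randomized rounding of each coordinate of β to a grid of resolution ε). Then the expected relative logistic-loss error satisfies E[ (ℓ(x, y; β̂) − ℓ(x, y; β)) / ℓ(x, y; β) ] ≤ 2·√(2·π·k)·exp(ε²·k/2)·ε. -/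
open MeasureTheory ProbabilityTheory
open scoped Classical

/-!
Write `z = β·x` and `ẑ = β̂·x`. For `y ∈ {0,1}` the logistic loss is `softplus(±z)` with
`softplus t = log (1 + eᵗ)`, and Bernoulli's inequality gives
`softplus w ≤ e^{|w - z|} softplus z`; hence the relative error is at most `e^{|ẑ - z|} - 1`.
Since `x` is binary, `ẑ - z` is a sum of `k` independent centred variables bounded by `ε`, so by
Hoeffding's lemma it is sub-Gaussian with variance proxy `c = kε²`. For a sub-Gaussian `Z`,
`E[e^{|Z|}] ≤ E[e^Z + e^{-Z}] ≤ 2e^{c/2}`, which suffices when `2πc ≥ 1`; for small `c` one uses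
`e^{|Z|} - 1 ≤ |Z| e^{|Z|}` and AM-GM to split it into `E[Z²]` and `E[e^{2|Z|}]`, both controlled
by the moment generating function.
-/

open Real NNReal

namespace Real

lemma sq_le_exp_add_exp_neg_sub_two (a : ℝ) : a ^ 2 ≤ exp a + exp (-a) - 2 := by
  have hsinh : |a / 2| ≤ |sinh (a / 2)| := by
    rw [abs_sinh]; exact self_le_sinh_iff.2 (abs_nonneg _)
  have hexp : exp a + exp (-a) - 2 = (2 * sinh (a / 2)) ^ 2 := by
    have h1 : exp a = exp (a / 2) ^ 2 := by rw [← exp_nat_mul]; ring_nf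
    have h2 : exp (-a) = exp (-(a / 2)) ^ 2 := by rw [← exp_nat_mul]; ring_nf
    have h3 : exp (a / 2) * exp (-(a / 2)) = 1 := by rw [← exp_add]; simp
    rw [sinh_eq, h1, h2]; linear_combination 2 * h3
  calc a ^ 2 = (2 * |a / 2|) ^ 2 := by rw [mul_pow, sq_abs]; ring
    _ ≤ (2 * |sinh (a / 2)|) ^ 2 := by gcongr
    _ = _ := by rw [hexp, mul_pow, mul_pow, sq_abs]

lemma exp_sub_one_le_mul_exp (t : ℝ) : exp t - 1 ≤ t * exp t := by
  have h := add_one_le_exp (-t)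
  have h' : exp (-t) * exp t = 1 := by rw [← exp_add]; simp
  nlinarith [exp_pos t]

lemma exp_abs_sub_one_le {σ : ℝ} (hσ : 0 < σ) (a : ℝ) :
    exp |a| - 1 ≤ a ^ 2 / (2 * σ) + σ / 2 * exp (2 * |a|) := by
  -- AM-GM, with the weight `σ` tuned to the sub-Gaussian scale
  have hamgm : 2 * σ * (|a| * exp |a|) ≤ a ^ 2 + σ ^ 2 * exp (2 * |a|) := by
    rw [show exp (2 * |a|) = exp |a| ^ 2 by rw [← exp_nat_mul]; norm_num]
    nlinarith [sq_nonneg (|a| - σ * exp |a|), sq_abs a]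
  calc exp |a| - 1 ≤ |a| * exp |a| := exp_sub_one_le_mul_exp _
    _ ≤ _ := by rw [div_add' _ _ _ (by positivity), le_div_iff₀ (by positivity)]; nlinarith

lemma exp_mul_abs_le (t a : ℝ) : exp (t * |a|) ≤ exp (t * a) + exp (-t * a) := by
  calc exp (t * |a|) ≤ exp |t * a| := by rw [abs_mul]; gcongr; exact le_abs_self t
    _ ≤ exp (t * a) + exp (-t * a) := by rw [neg_mul]; exact exp_abs_le _

end Real

namespace ProbabilityTheory.HasSubgaussianMGF

variable {Ω : Type*} [MeasurableSpace Ω] {μ : Measure Ω} {X : Ω → ℝ} {c : ℝ≥0}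

lemma integrable_exp_mul_abs (h : HasSubgaussianMGF X c μ) (t : ℝ) :
    Integrable (fun ω ↦ exp (t * |X ω|)) μ := by
  refine ((h.integrable_exp_mul t).add (h.integrable_exp_mul (-t))).mono'
    (by have := h.aemeasurable; fun_prop) (ae_of_all _ fun ω ↦ ?_)
  rw [norm_of_nonneg (exp_nonneg _)]
  exact exp_mul_abs_le t (X ω)

lemma integral_exp_mul_abs_le [IsProbabilityMeasure μ] (h : HasSubgaussianMGF X c μ) (t : ℝ) :
    ∫ ω, exp (t * |X ω|) ∂μ ≤ 2 * exp (c * t ^ 2 / 2) := by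
  calc ∫ ω, exp (t * |X ω|) ∂μ ≤ ∫ ω, (exp (t * X ω) + exp (-t * X ω)) ∂μ := by
        refine integral_mono (h.integrable_exp_mul_abs t)
          ((h.integrable_exp_mul t).add (h.integrable_exp_mul (-t))) fun ω ↦ ?_
        exact exp_mul_abs_le t (X ω)
    _ = mgf X μ t + mgf X μ (-t) :=
        integral_add (h.integrable_exp_mul t) (h.integrable_exp_mul (-t))
    _ ≤ exp (c * t ^ 2 / 2) + exp (c * (-t) ^ 2 / 2) := add_le_add (h.mgf_le t) (h.mgf_le (-t))
    _ = 2 * exp (c * t ^ 2 / 2) := by rw [neg_sq]; ring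

lemma integral_sq_le [IsProbabilityMeasure μ] (h : HasSubgaussianMGF X c μ) :
    ∫ ω, X ω ^ 2 ∂μ ≤ c * exp (c / 2) := by
  have hint : Integrable (fun ω ↦ exp (1 * X ω) + exp (-1 * X ω)) μ :=
    (h.integrable_exp_mul 1).add (h.integrable_exp_mul (-1))
  calc ∫ ω, X ω ^ 2 ∂μ ≤ ∫ ω, (exp (1 * X ω) + exp (-1 * X ω) - 2) ∂μ := by
        refine integral_mono (by simpa using (h.memLp 2).integrable_sq)
          (hint.sub (integrable_const 2)) fun ω ↦ ?_
        simpa using sq_le_exp_add_exp_neg_sub_two (X ω)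
    _ = mgf X μ 1 + mgf X μ (-1) - 2 := by
        rw [integral_sub hint (integrable_const 2),
          integral_add (h.integrable_exp_mul 1) (h.integrable_exp_mul (-1))]
        simp [mgf]
    _ ≤ 2 * (exp (c / 2) - 1) := by
        have h1 := h.mgf_le 1
        have h2 := h.mgf_le (-1)
        norm_num at h1 h2
        linarith
    _ ≤ c * exp (c / 2) := by linarith [exp_sub_one_le_mul_exp (c / 2)]

lemma integral_exp_abs_sub_one_le_sqrt_mul [IsProbabilityMeasure μ]
    (h : HasSubgaussianMGF X c μ) (hc : 0 < c) :
    ∫ ω, (exp |X ω| - 1) ∂μ ≤ √c * exp (c / 2) * (1 / 2 + exp (3 * c / 2)) := by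
  set σ := √(c : ℝ)
  have hσ : 0 < σ := Real.sqrt_pos.2 hc
  have hσc : σ ^ 2 = c := sq_sqrt c.2
  have hexp : Integrable (fun ω ↦ exp |X ω|) μ := by simpa using h.integrable_exp_mul_abs 1
  have hexp2 := h.integrable_exp_mul_abs 2
  have hsq : Integrable (fun ω ↦ X ω ^ 2) μ := by simpa using (h.memLp 2).integrable_sq
  calc ∫ ω, (exp |X ω| - 1) ∂μ ≤ ∫ ω, (X ω ^ 2 / (2 * σ) + σ / 2 * exp (2 * |X ω|)) ∂μ :=
        integral_mono (hexp.sub (integrable_const 1)) ((hsq.div_const _).add (hexp2.const_mul _))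
          fun ω ↦ exp_abs_sub_one_le hσ (X ω)
    _ = (∫ ω, X ω ^ 2 ∂μ) / (2 * σ) + σ / 2 * ∫ ω, exp (2 * |X ω|) ∂μ := by
        rw [integral_add (hsq.div_const _) (hexp2.const_mul _), integral_div, integral_const_mul]
    _ ≤ (c * exp (c / 2)) / (2 * σ) + σ / 2 * (2 * exp (c * 2 ^ 2 / 2)) := by
        gcongr
        · exact h.integral_sq_le
        · exact h.integral_exp_mul_abs_le 2
    _ = σ * exp (c / 2) * (1 / 2 + exp (3 * c / 2)) := by
        have hsplit : exp (c * 2 ^ 2 / 2) = exp (c / 2) * exp (3 * c / 2) := by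
          rw [← exp_add]; ring_nf
        rw [hsplit, ← hσc]; field_simp

lemma integral_exp_abs_sub_one_le [IsProbabilityMeasure μ] (h : HasSubgaussianMGF X c μ) :
    ∫ ω, (exp |X ω| - 1) ∂μ ≤ 2 * √(2 * π * c) * exp (c / 2) := by
  rcases eq_zero_or_pos c with rfl | hc
  · have hX : X =ᵐ[μ] 0 := h.ae_eq_zero_of_hasSubgaussianMGF_zero
    rw [integral_congr_ae (hX.mono fun ω hω ↦ by simp [hω] : _ =ᵐ[μ] fun _ ↦ (0 : ℝ))]
    simp
  by_cases hlarge : 1 ≤ 2 * π * c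
  · have hsqrt : 1 ≤ √(2 * π * c) := one_le_sqrt.2 hlarge
    have hexp : Integrable (fun ω ↦ exp |X ω|) μ := by simpa using h.integrable_exp_mul_abs 1
    have hmgf : ∫ ω, exp |X ω| ∂μ ≤ 2 * exp (c / 2) := by
      simpa using h.integral_exp_mul_abs_le 1
    calc ∫ ω, (exp |X ω| - 1) ∂μ = ∫ ω, exp |X ω| ∂μ - 1 := by
          simp [integral_sub hexp (integrable_const 1)]
      _ ≤ 2 * exp (c / 2) := by linarith
      _ ≤ 2 * √(2 * π * c) * exp (c / 2) := by nlinarith [exp_pos (c / 2)]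
  have hπ : 2 ≤ √(2 * π) := le_sqrt_of_sq_le (by nlinarith [pi_gt_three])
  have hexp3 : exp (3 * c / 2) ≤ 3 := by
    refine (exp_le_exp.2 ?_).trans exp_one_lt_three.le
    nlinarith [pi_gt_three]
  calc ∫ ω, (exp |X ω| - 1) ∂μ ≤ √c * exp (c / 2) * (1 / 2 + exp (3 * c / 2)) :=
        h.integral_exp_abs_sub_one_le_sqrt_mul hc
    _ ≤ √c * exp (c / 2) * 4 := by gcongr; linarith
    _ ≤ 2 * √(2 * π * c) * exp (c / 2) := by
        have hpos : 0 ≤ √c * exp (c / 2) := by positivity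
        rw [sqrt_mul (by positivity)]
        nlinarith [mul_le_mul_of_nonneg_right hπ hpos]

end ProbabilityTheory.HasSubgaussianMGF

namespace ProbabilityTheory

variable {Ω : Type*} [MeasurableSpace Ω] {μ : Measure Ω}

lemma hasSubgaussianMGF_sum_sub_of_iIndepFun [IsProbabilityMeasure μ] {ι : Type*}
    {X : ι → Ω → ℝ} {m : ι → ℝ} {ε : ℝ} (hmeas : ∀ i, AEMeasurable (X i) μ)
    (hindep : iIndepFun X μ) (hmean : ∀ i, μ[X i] = m i)
    (hbdd : ∀ i, ∀ᵐ ω ∂μ, |X i ω - m i| ≤ ε) (s : Finset ι) :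
    HasSubgaussianMGF (fun ω ↦ ∑ i ∈ s, (X i ω - m i)) (s.card * ‖ε‖₊ ^ 2) μ := by
  have hoeffding (i : ι) : HasSubgaussianMGF (fun ω ↦ X i ω - m i) (‖ε‖₊ ^ 2) μ := by
    have hIcc : ∀ᵐ ω ∂μ, X i ω ∈ Set.Icc (m i - ε) (m i + ε) := by
      filter_upwards [hbdd i] with ω hω
      exact ⟨by linarith [neg_abs_le (X i ω - m i)], by linarith [le_abs_self (X i ω - m i)]⟩
    convert hasSubgaussianMGF_of_mem_Icc (hmeas i) hIcc using 3
    · exact (hmean i).symm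
    · rw [show m i + ε - (m i - ε) = 2 * ε by ring, nnnorm_mul]
      simp
  have hsum := HasSubgaussianMGF.sum_of_iIndepFun
    (hindep.comp (fun i x ↦ x - m i) fun i ↦ measurable_id.sub_const _) (s := s)
    fun i _ ↦ hoeffding i
  simpa using hsum

end ProbabilityTheory

noncomputable def softplus (t : ℝ) : ℝ := log (1 + exp t)

lemma softplus_pos (t : ℝ) : 0 < softplus t := log_pos (by linarith [exp_pos t])

lemma continuous_softplus : Continuous softplus :=
  (continuous_const.add continuous_exp).log fun t ↦ (by positivity : (0 : ℝ) < 1 + exp t).ne'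

lemma softplus_le_exp_abs_sub_mul (z w : ℝ) : softplus w ≤ exp |w - z| * softplus z := by
  set p := exp |w - z|
  have hp : 1 ≤ p := one_le_exp (abs_nonneg _)
  have hw : exp w ≤ p * exp z := by
    rw [← exp_add]; gcongr; linarith [le_abs_self (w - z)]
  have hbernoulli : 1 + p * exp z ≤ (1 + exp z) ^ p :=
    one_add_mul_self_le_rpow_one_add (by linarith [exp_pos z]) hp
  calc softplus w ≤ log ((1 + exp z) ^ p) := log_le_log (by positivity) (by linarith)
    _ = p * softplus z := log_rpow (by positivity) _

lemma softplus_sub_div_le (z w : ℝ) :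
    (softplus w - softplus z) / softplus z ≤ exp |w - z| - 1 := by
  rw [div_le_iff₀ (softplus_pos z)]
  linarith [softplus_le_exp_abs_sub_mul z w]

lemma abs_softplus_sub_div_le (z w : ℝ) :
    |(softplus w - softplus z) / softplus z| ≤ exp |w - z| := by
  have hlow : -1 ≤ (softplus w - softplus z) / softplus z := by
    rw [le_div_iff₀ (softplus_pos z)]
    linarith [softplus_pos w]
  rw [abs_le]
  constructor <;> linarith [softplus_sub_div_le z w, one_le_exp (abs_nonneg (w - z))]

lemma integral_softplus_sub_div_le {Ω : Type*} [MeasurableSpace Ω] {μ : Measure Ω}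
    [IsProbabilityMeasure μ] {W Z : Ω → ℝ} {z : ℝ} {c : ℝ≥0} (hW : AEMeasurable W μ)
    (hZ : HasSubgaussianMGF Z c μ) (hWZ : ∀ ω, |W ω - z| = |Z ω|) :
    ∫ ω, (softplus (W ω) - softplus z) / softplus z ∂μ ≤ 2 * √(2 * π * c) * exp (c / 2) := by
  have hexp : Integrable (fun ω ↦ exp |Z ω|) μ := by simpa using hZ.integrable_exp_mul_abs 1
  have hint : Integrable (fun ω ↦ (softplus (W ω) - softplus z) / softplus z) μ :=
    hexp.mono' ((continuous_softplus.measurable.comp_aemeasurable hW).sub_const _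
      |>.div_const _).aestronglyMeasurable
      (ae_of_all _ fun ω ↦ hWZ ω ▸ abs_softplus_sub_div_le z (W ω))
  calc _ ≤ ∫ ω, (exp |Z ω| - 1) ∂μ :=
        integral_mono hint (hexp.sub (integrable_const 1)) fun ω ↦
          hWZ ω ▸ softplus_sub_div_le z (W ω)
    _ ≤ _ := hZ.integral_exp_abs_sub_one_le

lemma log_sigmoid (t : ℝ) : log (_root_.sigmoid t) = -softplus (-t) := by
  rw [_root_.sigmoid, one_div, log_inv, softplus]

lemma one_sub_sigmoid (t : ℝ) : 1 - _root_.sigmoid t = _root_.sigmoid (-t) := by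
  have h : exp t * exp (-t) = 1 := by rw [← exp_add]; simp
  simp only [_root_.sigmoid, neg_neg]
  field_simp
  linear_combination h

lemma logisticLoss_eq_softplus {d : ℕ} (x : Fin d → ℝ) {y : ℝ} (hy : y = 0 ∨ y = 1)
    (β : Fin d → ℝ) : logisticLoss x y β = softplus ((1 - 2 * y) * ∑ i, β i * x i) := by
  rcases hy with rfl | rfl <;> norm_num [logisticLoss, one_sub_sigmoid, log_sigmoid]

lemma sum_mul_eq_sum_filter_ne_zero {ι : Type*} [Fintype ι] {x : ι → ℝ}
    (hx : ∀ i, x i = 0 ∨ x i = 1) (a : ι → ℝ) :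
    ∑ i, a i * x i = ∑ i ∈ Finset.univ.filter fun i ↦ x i ≠ 0, a i := by
  rw [Finset.sum_filter]
  refine Finset.sum_congr rfl fun i _ ↦ ?_
  rcases hx i with h | h <;> simp [h]

theorem expected_relative_error_of_rounding_general
    {Ω : Type*} [MeasurableSpace Ω] (P : Measure Ω) [IsProbabilityMeasure P]
    (d : ℕ) (β : Fin d → ℝ) (ε : ℝ) (hε : 0 < ε)
    (x : Fin d → ℝ) (hx : ∀ i, x i = 0 ∨ x i = 1)
    (k : ℕ) (hk : k = (Finset.univ.filter fun i => x i ≠ 0).card)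
    (y : ℝ) (hy : y = 0 ∨ y = 1)
    (βhat : Fin d → Ω → ℝ)
    (hmeas : ∀ i, Measurable (βhat i))
    (hindep : iIndepFun βhat P)
    (hmean : ∀ i, (∫ ω, βhat i ω ∂P) = β i)
    (hbdd : ∀ i, ∀ᵐ ω ∂P, |βhat i ω - β i| ≤ ε) :
    (∫ ω, (logisticLoss x y (fun i => βhat i ω) - logisticLoss x y β)
        / logisticLoss x y β ∂P)
      ≤ 2 * Real.sqrt (2 * Real.pi * k) * Real.exp (ε ^ 2 * k / 2) * ε := by
  set Z : Ω → ℝ := fun ω ↦ ∑ i ∈ Finset.univ.filter (fun i ↦ x i ≠ 0), (βhat i ω - β i)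
  have hZ : HasSubgaussianMGF Z (k * ‖ε‖₊ ^ 2) P := hk ▸
    hasSubgaussianMGF_sum_sub_of_iIndepFun (fun i ↦ (hmeas i).aemeasurable) hindep hmean hbdd _
  have hsign : |1 - 2 * y| = 1 := by rcases hy with rfl | rfl <;> norm_num
  have hdist (ω : Ω) :
      |(1 - 2 * y) * ∑ i, βhat i ω * x i - (1 - 2 * y) * ∑ i, β i * x i| = |Z ω| := by
    rw [← mul_sub, abs_mul, hsign, one_mul, ← Finset.sum_sub_distrib]
    simp_rw [← sub_mul, sum_mul_eq_sum_filter_ne_zero hx, Z]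
  simp_rw [logisticLoss_eq_softplus x hy]
  calc _ ≤ 2 * √(2 * π * (k * ‖ε‖₊ ^ 2 : ℝ≥0)) * exp ((k * ‖ε‖₊ ^ 2 : ℝ≥0) / 2) :=
        integral_softplus_sub_div_le (by fun_prop) hZ hdist
    _ = 2 * √(2 * π * k) * exp (ε ^ 2 * k / 2) * ε := by
        push_cast
        rw [norm_eq_abs, sq_abs, show 2 * π * (k * ε ^ 2) = 2 * π * k * ε ^ 2 by ring,
          sqrt_mul (by positivity), sqrt_sq hε.le]
        ring_nf

/-- Expected relative logistic-loss error of a model obtained by unbiased independent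
per-coordinate rounding to resolution `ε`: it is at most `2 √(2πk) exp(ε²k/2) ε`,
where `k = ‖x‖₀` is the number of nonzero entries of the binary feature vector `x`. -/
theorem expected_relative_error_of_rounding
    {Ω : Type*} [MeasurableSpace Ω] (P : Measure Ω) [IsProbabilityMeasure P]
    (d : ℕ) (β : Fin d → ℝ) (ε : ℝ) (hε : 0 < ε)
    (x : Fin d → ℝ) (hx : ∀ i, x i = 0 ∨ x i = 1)
    (k : ℕ) (hk : k = (Finset.univ.filter fun i => x i ≠ 0).card) (hk1 : 1 ≤ k)
    (y : ℝ) (hy : y = 0 ∨ y = 1) (hpos : 0 < logisticLoss x y β)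
    (βhat : Fin d → Ω → ℝ)
    (hmeas : ∀ i, Measurable (βhat i))
    (hindep : iIndepFun βhat P)
    (hmean : ∀ i, (∫ ω, βhat i ω ∂P) = β i)
    (hbdd : ∀ i, ∀ᵐ ω ∂P, |βhat i ω - β i| ≤ ε) :
    (∫ ω, (logisticLoss x y (fun i => βhat i ω) - logisticLoss x y β)
        / logisticLoss x y β ∂P)
      ≤ 2 * Real.sqrt (2 * Real.pi * k) * Real.exp (ε ^ 2 * k / 2) * ε :=
  expected_relative_error_of_rounding_general P d β ε hε x hx k hk y hy βhat hmeas hindep hmean hbdd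
end
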